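/- arXiv:0705.0834 — 4 statements merged into one kernel-verified Lean document; each statement's English description precedes it below -/
import Mathlib

section
/- The Jacobson radical of the group algebra kD equals kD(1+σ) + kD(1+τ), the left ideal of kD generated by the elements 1+σ and 1+τ. -/
set_option maxHeartbeats 1600000


open MonoidAlgebra

section Aux

variable {k : Type} [Field k] [CharP k 2] {D : Type} [Group D] [Fintype D]

private lemma aux_charR : CharP (MonoidAlgebra k D) 2 := by
  have hinj : Function.Injective (algebraMap k (MonoidAlgebra k D)) := by
    intro a b h
    have h2 : (MonoidAlgebra.single (1:D) a : MonoidAlgebra k D) = MonoidAlgebra.single 1 b := by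
      simpa [MonoidAlgebra.coe_algebraMap] using h
    exact MonoidAlgebra.single_right_injective h2
  exact charP_of_injective_algebraMap hinj 2

/-- Every generator-type element `1 + g` lies in every maximal left ideal of the group
algebra of a 2-group in characteristic 2. -/
private lemma aux_gen_mem_max (hp : IsPGroup 2 D) (J : Ideal (MonoidAlgebra k D))
    (hJ : J.IsMaximal) (g : D) : 1 + of k D g ∈ J := by
  classical
  haveI : CharP (MonoidAlgebra k D) 2 := aux_charR
  let S := MonoidAlgebra k D ⧸ J
  let v : S := Submodule.Quotient.mk 1
  have hv : v ≠ 0 := by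
    intro h
    have h1 : (1 : MonoidAlgebra k D) ∈ J := (Submodule.Quotient.mk_eq_zero J).mp h
    exact hJ.ne_top ((Ideal.eq_top_iff_one J).mpr h1)
  have hss : ∀ s : S, s + s = 0 := by
    intro s
    have h2 : (2 : MonoidAlgebra k D) • s = s + s := two_smul _ s
    rw [← h2, CharTwo.two_eq_zero, zero_smul]
  -- orbit sums
  let os : Finset D → S := fun T => ∑ h ∈ T, (of k D h : MonoidAlgebra k D) • v
  have hosadd : ∀ T T' : Finset D, os T + os T' = os (symmDiff T T') := by
    intro T T'
    have e1 : os T = os (T \ T') + os (T ∩ T') := by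
      rw [show os (T \ T') + os (T ∩ T') = os ((T \ T') ∪ (T ∩ T')) from
        (Finset.sum_union (Finset.sdiff_disjoint.mono_right Finset.inter_subset_right)).symm,
        Finset.sdiff_union_inter]
    have e2 : os T' = os (T' \ T) + os (T ∩ T') := by
      rw [Finset.inter_comm, show os (T' \ T) + os (T' ∩ T) = os ((T' \ T) ∪ (T' ∩ T)) from
        (Finset.sum_union (Finset.sdiff_disjoint.mono_right Finset.inter_subset_right)).symm,
        Finset.sdiff_union_inter]
    have e3 : os (symmDiff T T') = os (T \ T') + os (T' \ T) := by
      rw [symmDiff_def]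
      exact Finset.sum_union
        (Finset.disjoint_left.mpr (fun a ha hb => (Finset.mem_sdiff.mp hb).2 (Finset.mem_sdiff.mp ha).1))
    rw [e1, e2, e3]
    calc os (T \ T') + os (T ∩ T') + (os (T' \ T) + os (T ∩ T'))
        = os (T \ T') + os (T' \ T) + (os (T ∩ T') + os (T ∩ T')) := by abel
      _ = os (T \ T') + os (T' \ T) := by rw [hss, add_zero]
  let A : AddSubgroup S :=
    { carrier := Set.range os
      zero_mem' := ⟨∅, by simp [os]⟩
      add_mem' := by rintro a b ⟨T, rfl⟩ ⟨T', rfl⟩; exact ⟨symmDiff T T', (hosadd T T').symm⟩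
      neg_mem' := by
        rintro a ⟨T, rfl⟩
        exact ⟨T, (neg_eq_of_add_eq_zero_left (hss (os T))).symm⟩ }
  have hsmul_mem : ∀ (g' : D) (x : S), x ∈ A → (of k D g' : MonoidAlgebra k D) • x ∈ A := by
    rintro g' x ⟨T, rfl⟩
    refine ⟨T.image (g' * ·), ?_⟩
    show ∑ h ∈ T.image (g' * ·), (of k D h : MonoidAlgebra k D) • v = _
    rw [Finset.sum_image (by intro a _ b _ h; exact mul_left_cancel h)]
    show _ = (of k D g' : MonoidAlgebra k D) • ∑ h ∈ T, (of k D h : MonoidAlgebra k D) • v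
    rw [Finset.smul_sum]
    refine Finset.sum_congr rfl fun h _ => ?_
    rw [← mul_smul, ← map_mul]
  haveI hAfin : Finite ↥A := Set.Finite.to_subtype (Set.finite_range os)
  letI : SMul D ↥A := ⟨fun g' a => ⟨(of k D g' : MonoidAlgebra k D) • (a : S), hsmul_mem g' _ a.2⟩⟩
  letI : MulAction D ↥A :=
    { one_smul := fun a => Subtype.ext (by
        show (of k D 1 : MonoidAlgebra k D) • (a : S) = a
        rw [map_one, one_smul])
      mul_smul := fun x y a => Subtype.ext (by
        show (of k D (x * y) : MonoidAlgebra k D) • (a : S) =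
          (of k D x : MonoidAlgebra k D) • ((of k D y : MonoidAlgebra k D) • (a : S))
        rw [map_mul, mul_smul]) }
  haveI : Fact (Nat.Prime 2) := ⟨Nat.prime_two⟩
  have hmod := hp.card_modEq_card_fixedPoints (↥A)
  have hvA : v ∈ A := ⟨{1}, by simp only [os, Finset.sum_singleton, map_one, one_smul]⟩
  have hA2 : (2 : ℕ) ∣ Nat.card ↥A := by
    have h1 : addOrderOf (⟨v, hvA⟩ : ↥A) = 2 := by
      apply addOrderOf_eq_prime
      · apply Subtype.ext
        show ((2 • (⟨v, hvA⟩ : ↥A) : ↥A) : S) = (0 : S)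
        rw [AddSubgroup.coe_nsmul]
        show 2 • v = 0
        rw [two_nsmul, hss]
      · intro h
        exact hv (congrArg Subtype.val h)
    rw [← h1]
    exact addOrderOf_dvd_natCard _
  have hfix2 : (2 : ℕ) ∣ Nat.card (MulAction.fixedPoints D ↥A) :=
    (Nat.modEq_zero_iff_dvd).mp ((hmod.symm.trans ((Nat.modEq_zero_iff_dvd).mpr hA2)).symm.symm)
  have hz0 : (⟨0, A.zero_mem⟩ : ↥A) ∈ MulAction.fixedPoints D ↥A := by
    intro g'
    apply Subtype.ext
    show (of k D g' : MonoidAlgebra k D) • (0 : S) = 0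
    rw [smul_zero]
  haveI : Finite ↥(MulAction.fixedPoints D ↥A) := Subtype.finite
  have hpos : 0 < Nat.card ↥(MulAction.fixedPoints D ↥A) :=
    Nat.card_pos_iff.mpr ⟨⟨⟨_, hz0⟩⟩, inferInstance⟩
  have honelt : 1 < Nat.card ↥(MulAction.fixedPoints D ↥A) := by
    rcases hfix2 with ⟨c, hc⟩
    omega
  haveI : Nontrivial ↥(MulAction.fixedPoints D ↥A) := by
    rwa [← Finite.one_lt_card_iff_nontrivial]
  obtain ⟨w', hw'⟩ := exists_ne (⟨⟨0, A.zero_mem⟩, hz0⟩ : ↥(MulAction.fixedPoints D ↥A))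
  set w0 : S := ((w' : ↥A) : S) with hw0def
  have hw0 : w0 ≠ 0 := by
    intro h
    apply hw'
    apply Subtype.ext; apply Subtype.ext; exact h
  have hwfix : ∀ g' : D, (of k D g' : MonoidAlgebra k D) • w0 = w0 := by
    intro g'
    have := w'.2 g'
    exact congrArg Subtype.val this
  -- the fixed-point submodule
  have key : ∀ (x : S), (∀ g' : D, (of k D g' : MonoidAlgebra k D) • x = x) →
      ∀ (r : MonoidAlgebra k D) (g' : D), ((of k D g' : MonoidAlgebra k D) * r) • x = r • x := by
    intro x hx r
    induction r using MonoidAlgebra.induction_on with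
    | of h =>
      intro g'
      rw [← map_mul, hx (g' * h), hx h]
    | add f1 f2 h1 h2 =>
      intro g'
      rw [mul_add, add_smul, add_smul, h1, h2]
    | smul c f hf =>
      intro g'
      rw [Algebra.smul_def, ← mul_assoc, ← Algebra.commutes c (of k D g'), mul_assoc,
        mul_smul, hf g', ← mul_smul]
  let C : Submodule (MonoidAlgebra k D) S :=
    { carrier := {x | ∀ g' : D, (of k D g' : MonoidAlgebra k D) • x = x}
      add_mem' := fun hx hy g' => by rw [smul_add, hx g', hy g']
      zero_mem' := fun g' => smul_zero _
      smul_mem' := fun r x hx g' => by rw [smul_smul]; exact key x hx r g' }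
  have hw0C : w0 ∈ C := hwfix
  obtain ⟨u, hu⟩ := Submodule.Quotient.mk_surjective J w0
  have huJ : u ∉ J := by
    intro h
    exact hw0 (by rw [← hu]; exact (Submodule.Quotient.mk_eq_zero J).mpr h)
  have hle : J ≤ Submodule.comap J.mkQ C := by
    intro x hx
    show J.mkQ x ∈ C
    have : J.mkQ x = 0 := (Submodule.Quotient.mk_eq_zero J).mpr hx
    rw [this]
    exact C.zero_mem
  have hucomap : u ∈ Submodule.comap J.mkQ C := by
    show J.mkQ u ∈ C
    rw [Submodule.mkQ_apply, hu]
    exact hw0C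
  have hlt : J < Submodule.comap J.mkQ C :=
    lt_of_le_of_ne hle (fun h => huJ (h ▸ hucomap))
  have htop : Submodule.comap J.mkQ C = ⊤ := hJ.out.2 _ hlt
  have hCtop : ∀ s : S, s ∈ C := by
    intro s
    obtain ⟨y, hy⟩ := Submodule.Quotient.mk_surjective J s
    have : y ∈ Submodule.comap J.mkQ C := by rw [htop]; trivial
    rw [← hy]
    exact this
  have hvC := hCtop v g
  have hmkeq : (Submodule.Quotient.mk (of k D g) : S) = Submodule.Quotient.mk 1 := by
    calc (Submodule.Quotient.mk (of k D g) : S)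
        = Submodule.Quotient.mk ((of k D g : MonoidAlgebra k D) • (1 : MonoidAlgebra k D)) := by
          rw [smul_eq_mul, mul_one]
      _ = (of k D g : MonoidAlgebra k D) • (Submodule.Quotient.mk 1 : S) :=
          Submodule.Quotient.mk_smul J _ _
      _ = Submodule.Quotient.mk 1 := hvC
  have hmem : (of k D g : MonoidAlgebra k D) - 1 ∈ J := (Submodule.Quotient.eq J).mp hmkeq
  have heq : (1 : MonoidAlgebra k D) + of k D g = of k D g - 1 := by
    rw [CharTwo.sub_eq_add, add_comm]
  rw [heq]
  exact hmem

end Aux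

/-- For `D` the dihedral group of order `2^d` (`d ≥ 3`) and `k` an
algebraically closed field of characteristic `2`, the Jacobson radical of the group
algebra `kD` equals the left ideal of `kD` generated by `1 + σ` and `1 + τ`. -/
theorem stmt_0 {k : Type} [Field k] [IsAlgClosed k] [CharP k 2]
    {D : Type} [Group D] [Fintype D] (d : ℕ) (σ τ : D)
    (hd : 3 ≤ d) (hσ : σ ^ 2 = 1) (hτ : τ ^ 2 = 1)
    (hst : orderOf (σ * τ) = 2 ^ (d - 1)) (hgen : Subgroup.closure {σ, τ} = ⊤)
    (hcard : Fintype.card D = 2 ^ d) :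
    Ideal.jacobson (⊥ : Ideal (MonoidAlgebra k D)) =
      Ideal.span {1 + of k D σ, 1 + of k D τ} := by
  classical
  haveI : CharP (MonoidAlgebra k D) 2 := aux_charR
  have hp : IsPGroup 2 D := IsPGroup.of_card (by rw [Nat.card_eq_fintype_card, hcard])
  set Sp : Ideal (MonoidAlgebra k D) := Ideal.span {1 + of k D σ, 1 + of k D τ} with hSp
  -- the generator membership lemma
  have hgmem : ∀ g : D, 1 + of k D g ∈ Sp := by
    intro g
    have hg : g ∈ Subgroup.closure ({σ, τ} : Set D) := by rw [hgen]; trivial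
    induction hg using Subgroup.closure_induction with
    | mem x hx =>
      rcases hx with rfl | rfl
      · exact Ideal.subset_span (Or.inl rfl)
      · exact Ideal.subset_span (Or.inr rfl)
    | one =>
      rw [map_one, CharTwo.add_self_eq_zero]
      exact Sp.zero_mem
    | mul x y hx hy px py =>
      have hkey : of k D x * (1 + of k D y) + (1 + of k D x) = 1 + of k D (x * y) := by
        rw [map_mul, mul_add, mul_one]
        have h2 := CharTwo.add_self_eq_zero (R := MonoidAlgebra k D) (of k D x)
        calc of k D x + of k D x * of k D y + (1 + of k D x)
            = 1 + of k D x * of k D y + (of k D x + of k D x) := by abel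
          _ = 1 + of k D x * of k D y := by rw [h2, add_zero]
      rw [← hkey]
      exact Sp.add_mem (Ideal.mul_mem_left _ _ py) px
    | inv x hx px =>
      have hkey : of k D x⁻¹ * (1 + of k D x) = 1 + of k D x⁻¹ := by
        rw [mul_add, mul_one, ← map_mul, inv_mul_cancel, map_one, add_comm]
      rw [← hkey]
      exact Ideal.mul_mem_left _ _ px
  -- the augmentation map
  let ε : MonoidAlgebra k D →ₐ[k] k := MonoidAlgebra.lift k k D 1
  have hker : (RingHom.ker (ε : MonoidAlgebra k D →+* k)).IsMaximal := by
    rw [Ideal.isMaximal_iff]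
    constructor
    · intro h
      rw [RingHom.mem_ker] at h
      replace h : ε 1 = 0 := h
      rw [map_one] at h
      exact one_ne_zero h
    · intro I x hle hx hxI
      rw [RingHom.mem_ker] at hx
      replace hx : ε x ≠ 0 := hx
      have h1 : algebraMap k (MonoidAlgebra k D) (ε x)⁻¹ * x - 1 ∈
          RingHom.ker (ε : MonoidAlgebra k D →+* k) := by
        rw [RingHom.mem_ker]
        show ε (algebraMap k (MonoidAlgebra k D) (ε x)⁻¹ * x - 1) = 0
        rw [map_sub, map_mul, map_one, AlgHom.commutes, Algebra.algebraMap_self_apply, inv_mul_cancel₀ hx, sub_self]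
      have h2 : algebraMap k (MonoidAlgebra k D) (ε x)⁻¹ * x ∈ I := Ideal.mul_mem_left I _ hxI
      have h3 := I.sub_mem h2 (hle h1)
      simpa using h3
  apply le_antisymm
  · -- jacobson ⊥ ≤ Sp
    have hle1 : Ideal.jacobson (⊥ : Ideal (MonoidAlgebra k D)) ≤
        RingHom.ker (ε : MonoidAlgebra k D →+* k) :=
      sInf_le ⟨bot_le, hker⟩
    refine le_trans hle1 ?_
    intro f hf
    rw [RingHom.mem_ker] at hf
    have hfε : ε f = 0 := hf
    -- decompose f
    have hsum : ∑ g ∈ f.coeff.support, f.coeff g = 0 := by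
      have hεf : ε f = ∑ g ∈ f.coeff.support, f.coeff g := by
        rw [show (ε f : k) = MonoidAlgebra.lift k k D 1 f from rfl, MonoidAlgebra.lift_apply]
        simp [Finsupp.sum]
      rw [← hεf, hfε]
    have h1 : ∀ (g : D) (c : k), (MonoidAlgebra.single g c : MonoidAlgebra k D) =
        MonoidAlgebra.single (1:D) c * (1 + of k D g) + MonoidAlgebra.single (1:D) c := by
      intro g c
      rw [mul_add, mul_one, MonoidAlgebra.of_apply]
      rw [show (MonoidAlgebra.single (1:D) c * MonoidAlgebra.single g (1:k) : MonoidAlgebra k D)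
          = MonoidAlgebra.single g c by rw [MonoidAlgebra.single_mul_single, one_mul, mul_one]]
      have h2 := CharTwo.add_self_eq_zero (R := MonoidAlgebra k D) (MonoidAlgebra.single (1:D) c)
      calc (MonoidAlgebra.single g c : MonoidAlgebra k D)
          = MonoidAlgebra.single g c + (MonoidAlgebra.single (1:D) c + MonoidAlgebra.single (1:D) c) := by
            rw [h2, add_zero]
        _ = MonoidAlgebra.single (1:D) c + MonoidAlgebra.single g c + MonoidAlgebra.single (1:D) c := by abel
    have hrepr : f = ∑ g ∈ f.coeff.support,
        (MonoidAlgebra.single (1:D) (f.coeff g) : MonoidAlgebra k D) * (1 + of k D g) := by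
      calc f = ∑ g ∈ f.coeff.support, (MonoidAlgebra.single g (f.coeff g) : MonoidAlgebra k D) := by
            conv_lhs => rw [← MonoidAlgebra.sum_coeff_single f]
            rfl
        _ = ∑ g ∈ f.coeff.support,
            ((MonoidAlgebra.single (1:D) (f.coeff g) : MonoidAlgebra k D) * (1 + of k D g)
              + MonoidAlgebra.single (1:D) (f.coeff g)) := by
            exact Finset.sum_congr rfl fun g _ => h1 g (f.coeff g)
        _ = (∑ g ∈ f.coeff.support, (MonoidAlgebra.single (1:D) (f.coeff g) : MonoidAlgebra k D) * (1 + of k D g))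
            + ∑ g ∈ f.coeff.support, (MonoidAlgebra.single (1:D) (f.coeff g) : MonoidAlgebra k D) := by
            rw [Finset.sum_add_distrib]
        _ = (∑ g ∈ f.coeff.support, (MonoidAlgebra.single (1:D) (f.coeff g) : MonoidAlgebra k D) * (1 + of k D g))
            + MonoidAlgebra.single (1:D) (∑ g ∈ f.coeff.support, f.coeff g) := by
            congr 1
            induction f.coeff.support using Finset.induction_on with
            | empty => simp
            | insert _ _ h ih =>
              rw [Finset.sum_insert h, Finset.sum_insert h, ih, MonoidAlgebra.single_add]
        _ = _ := by rw [hsum, MonoidAlgebra.single_zero, add_zero]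
    rw [hrepr]
    exact Submodule.sum_mem _ fun g _ => Ideal.mul_mem_left _ _ (hgmem g)
  · -- Sp ≤ jacobson ⊥
    rw [hSp, Ideal.span_le]
    rintro x hx
    show x ∈ sInf {J : Ideal (MonoidAlgebra k D) | ⊥ ≤ J ∧ J.IsMaximal}
    rw [Ideal.mem_sInf]
    rintro J ⟨-, hJ⟩
    rcases hx with rfl | rfl
    · exact aux_gen_mem_max hp J hJ σ
    · exact aux_gen_mem_max hp J hJ τ
end

section
/- The Jacobson radical J of kD satisfies J^{2^{d-1}} ≠ 0 and J^{2^{d-1}+1} = 0 (so the radical series of kD as a left module over itself has length 2^{d-1}+1); moreover kD is indecomposable as a left module over itself (equivalently, kD is a local ring). -/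
set_option linter.unusedSectionVars false
set_option linter.unusedVariables false
set_option maxHeartbeats 1000000

open MonoidAlgebra

namespace Stmt2Aux

section GroupPart
variable {D : Type} [Group D] [Fintype D]

lemma dconj_zpow (x σ : D) (hc : σ * x = x⁻¹ * σ) (i : ℤ) :
    σ * x ^ i = (x ^ i)⁻¹ * σ := by
  have k1 : MulAut.conj σ x = x⁻¹ := by
    simp only [MulAut.conj_apply]
    rw [hc]; group
  have k2 : MulAut.conj σ (x ^ i) = (x ^ i)⁻¹ := by
    rw [map_zpow, k1, inv_zpow]
  simp only [MulAut.conj_apply] at k2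
  calc σ * x ^ i = (σ * x ^ i * σ⁻¹) * σ := by group
    _ = (x ^ i)⁻¹ * σ := by rw [k2]

lemma classify (σ τ : D) (hσ : σ ^ 2 = 1) (hτ : τ ^ 2 = 1)
    (hgen : Subgroup.closure {σ, τ} = ⊤) (g : D) :
    (∃ i : ℕ, g = (σ * τ) ^ i) ∨ ∃ i : ℕ, g = (σ * τ) ^ i * σ := by
  have hσ2 : σ * σ = 1 := by rw [← sq]; exact hσ
  have hσinv : σ⁻¹ = σ := by rw [← mul_eq_one_iff_inv_eq, hσ2]
  have hτinv : τ⁻¹ = τ := by rw [← mul_eq_one_iff_inv_eq, ← sq, hτ]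
  set x := σ * τ with hx
  have hc : σ * x = x⁻¹ * σ := by
    have h1 : σ * x = τ := by rw [hx, ← mul_assoc, hσ2, one_mul]
    have h2 : x⁻¹ * σ = τ := by rw [hx, mul_inv_rev, hσinv, hτinv, mul_assoc, hσ2, mul_one]
    rw [h1, h2]
  set S : Subgroup D :=
    { carrier := {g | (∃ i : ℤ, g = x ^ i) ∨ ∃ i : ℤ, g = x ^ i * σ}
      one_mem' := Or.inl ⟨0, by simp⟩
      mul_mem' := by
        rintro g h (⟨i, rfl⟩ | ⟨i, rfl⟩) (⟨j, rfl⟩ | ⟨j, rfl⟩)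
        · exact Or.inl ⟨i + j, by rw [zpow_add]⟩
        · exact Or.inr ⟨i + j, by rw [zpow_add, mul_assoc]⟩
        · refine Or.inr ⟨i - j, ?_⟩
          rw [mul_assoc, dconj_zpow x σ hc, ← mul_assoc, ← zpow_neg, ← zpow_add,
            sub_eq_add_neg]
        · refine Or.inl ⟨i - j, ?_⟩
          rw [mul_assoc, ← mul_assoc σ, dconj_zpow x σ hc, mul_assoc, hσ2,
            mul_one, ← zpow_neg, ← zpow_add, sub_eq_add_neg]
      inv_mem' := by
        rintro g (⟨i, rfl⟩ | ⟨i, rfl⟩)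
        · exact Or.inl ⟨-i, by rw [zpow_neg]⟩
        · refine Or.inr ⟨i, ?_⟩
          rw [mul_inv_rev, hσinv, ← zpow_neg, dconj_zpow x σ hc, zpow_neg, inv_inv] } with hS
  have hστ : σ ∈ S ∧ τ ∈ S := by
    constructor
    · exact Or.inr ⟨0, by simp⟩
    · refine Or.inr ⟨-1, ?_⟩
      have : τ = x⁻¹ * σ := by
        rw [hx, mul_inv_rev, hσinv, hτinv, mul_assoc, hσ2, mul_one]
      rw [this, zpow_neg_one]
  have hle : Subgroup.closure {σ, τ} ≤ S := by
    rw [Subgroup.closure_le]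
    rintro g hg
    rcases hg with h | h
    · simpa [h] using hστ.1
    · simp only [Set.mem_singleton_iff] at h; simpa [h] using hστ.2
  have hgS : g ∈ S := by rw [hgen] at hle; exact hle (Subgroup.mem_top g)
  have topow : ∀ i : ℤ, ∃ n : ℕ, x ^ i = x ^ n := by
    intro i
    have : x ^ i ∈ Subgroup.zpowers x := ⟨i, rfl⟩
    rw [← mem_powers_iff_mem_zpowers] at this
    obtain ⟨n, hn⟩ := this
    exact ⟨n, hn.symm⟩
  rcases hgS with ⟨i, hi⟩ | ⟨i, hi⟩
  · obtain ⟨n, hn⟩ := topow i; exact Or.inl ⟨n, by rw [hi, hn]⟩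
  · obtain ⟨n, hn⟩ := topow i; exact Or.inr ⟨n, by rw [hi, hn]⟩

lemma sigma_not_zpowers (σ τ : D) (d : ℕ) (hd : 3 ≤ d) (hσ : σ ^ 2 = 1) (hτ : τ ^ 2 = 1)
    (hst : orderOf (σ * τ) = 2 ^ (d - 1)) (hgen : Subgroup.closure {σ, τ} = ⊤)
    (hcard : Fintype.card D = 2 ^ d) :
    σ ∉ Subgroup.zpowers (σ * τ) := by
  intro hmem
  have hσinv : σ⁻¹ = σ := by
    rw [← mul_eq_one_iff_inv_eq, ← sq, hσ]
  have hτmem : τ ∈ Subgroup.zpowers (σ * τ) := by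
    have h2 := Subgroup.mul_mem _ (Subgroup.inv_mem _ hmem) (Subgroup.mem_zpowers (σ * τ))
    rwa [show σ⁻¹ * (σ * τ) = τ by group] at h2
  have hle : Subgroup.closure {σ, τ} ≤ Subgroup.zpowers (σ * τ) := by
    rw [Subgroup.closure_le]
    rintro g hg
    rcases hg with h | h
    · simpa [h] using hmem
    · simp only [Set.mem_singleton_iff] at h; simpa [h] using hτmem
  rw [hgen, top_le_iff] at hle
  have h1 : Nat.card (Subgroup.zpowers (σ * τ)) = Nat.card D := by
    rw [hle]; exact Subgroup.card_top
  rw [Nat.card_zpowers, hst, Nat.card_eq_fintype_card, hcard] at h1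
  have : d - 1 < d := by omega
  exact absurd h1 (by
    intro h
    have := Nat.pow_right_injective (le_refl 2) h
    omega)

end GroupPart


open MonoidAlgebra

section RingPart
variable {k : Type} [Field k] [CharP k 2] {D : Type} [Group D] [Fintype D]

local notation "A" => MonoidAlgebra k D

lemma myCharP : CharP (MonoidAlgebra k D) 2 := by
  have : Nontrivial (MonoidAlgebra k D) := inferInstance
  exact charP_of_injective_ringHom (algebraMap k (MonoidAlgebra k D)).injective 2

section Elem
variable (x σ : D)

/-- abbreviations -/
noncomputable def XX (i : ℕ) : MonoidAlgebra k D := MonoidAlgebra.of k D (x ^ i)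
noncomputable def uu : MonoidAlgebra k D := MonoidAlgebra.of k D x + 1
noncomputable def aa : MonoidAlgebra k D := MonoidAlgebra.of k D σ + 1

lemma XX_mul (i j : ℕ) : (XX x i : A) * XX x j = XX x (i + j) := by
  simp [XX, ← map_mul, ← pow_add]

lemma XX_zero : (XX x 0 : A) = 1 := by simp [XX, MonoidAlgebra.one_def]

lemma uu_eq : (uu x : A) = XX x 1 + 1 := by simp [uu, XX]

lemma XX_comm (i j : ℕ) : (XX x i : A) * XX x j = XX x j * XX x i := by
  rw [XX_mul, XX_mul, Nat.add_comm]

lemma uu_comm_XX (j : ℕ) : Commute (XX x j : A) (uu x) := by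
  rw [uu_eq]
  unfold Commute SemiconjBy
  rw [mul_add, add_mul, XX_comm, mul_one, one_mul]

lemma aa_sq (hσ2 : σ * σ = 1) : (aa σ : A) * aa σ = 0 := by
  haveI : CharP (MonoidAlgebra k D) 2 := myCharP (k := k) (D := D)
  have : (MonoidAlgebra.of k D σ) * (MonoidAlgebra.of k D σ) = 1 := by
    rw [← map_mul, hσ2, map_one]
  have expand : (MonoidAlgebra.of k D σ + 1) * (MonoidAlgebra.of k D σ + 1)
      = MonoidAlgebra.of k D σ * MonoidAlgebra.of k D σ
        + (MonoidAlgebra.of k D σ + MonoidAlgebra.of k D σ) + 1 := by noncomm_ring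
  rw [aa, expand, this, CharTwo.add_self_eq_zero, add_zero]
  exact CharTwo.add_self_eq_zero 1


/-- the span of the powers of x -/
noncomputable def Pspan : Submodule k (MonoidAlgebra k D) :=
  Submodule.span k (Set.range fun i : ℕ => (XX x i : MonoidAlgebra k D))

lemma XX_mem_Pspan (i : ℕ) : (XX x i : A) ∈ Pspan x := Submodule.subset_span ⟨i, rfl⟩

lemma one_mem_Pspan : (1 : A) ∈ Pspan x := by rw [← XX_zero x]; exact XX_mem_Pspan x 0

lemma Pspan_mul {c c' : A} (hc : c ∈ Pspan x) (hc' : c' ∈ Pspan x) :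
    c * c' ∈ Pspan x := by
  induction hc using Submodule.span_induction with
  | mem z hz =>
    obtain ⟨i, rfl⟩ := hz
    induction hc' using Submodule.span_induction with
    | mem w hw => obtain ⟨j, rfl⟩ := hw; rw [XX_mul]; exact XX_mem_Pspan x _
    | zero => rw [mul_zero]; exact Submodule.zero_mem _
    | add y z _ _ hy hz => rw [mul_add]; exact Submodule.add_mem _ hy hz
    | smul r y _ hy => rw [mul_smul_comm]; exact Submodule.smul_mem _ r hy
  | zero => rw [zero_mul]; exact Submodule.zero_mem _
  | add y z _ _ hy hz => rw [add_mul]; exact Submodule.add_mem _ hy hz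
  | smul r y _ hy => rw [smul_mul_assoc]; exact Submodule.smul_mem _ r hy

lemma uu_mem_Pspan : (uu x : A) ∈ Pspan x := by
  rw [uu_eq]
  exact Submodule.add_mem _ (XX_mem_Pspan x 1) (one_mem_Pspan x)

lemma Pspan_comm_uu {c : A} (hc : c ∈ Pspan x) : Commute c (uu x) := by
  induction hc using Submodule.span_induction with
  | mem z hz => obtain ⟨i, rfl⟩ := hz; exact uu_comm_XX x i
  | zero => exact Commute.zero_left _
  | add y z _ _ hy hz => exact hy.add_left hz
  | smul r y _ hy => exact hy.smul_left r

lemma XX_add_one (j : ℕ) : ∃ c ∈ Pspan x, (XX x j : A) + 1 = c * uu x := by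
  haveI : CharP (MonoidAlgebra k D) 2 := myCharP (k := k) (D := D)
  induction j with
  | zero =>
    refine ⟨0, Submodule.zero_mem _, ?_⟩
    rw [XX_zero, zero_mul, CharTwo.add_self_eq_zero]
  | succ n ih =>
    obtain ⟨c, hc, hcu⟩ := ih
    refine ⟨XX x 1 * c + 1, Submodule.add_mem _ (Pspan_mul x (XX_mem_Pspan x 1) hc)
      (one_mem_Pspan x), ?_⟩
    have h1 : (XX x (n + 1) : A) = XX x 1 * XX x n := by rw [XX_mul, Nat.add_comm]
    have huu : (uu x : A) = XX x 1 + 1 := uu_eq x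
    calc (XX x (n + 1) : A) + 1
        = (XX x 1 * XX x n + 1) + 0 := by rw [h1, add_zero]
      _ = (XX x 1 * XX x n + 1) + (XX x 1 + XX x 1) := by rw [CharTwo.add_self_eq_zero]
      _ = XX x 1 * (XX x n + 1) + (XX x 1 + 1) := by noncomm_ring
      _ = XX x 1 * (c * uu x) + 1 * uu x := by rw [hcu, one_mul, ← huu]
      _ = (XX x 1 * c + 1) * uu x := by noncomm_ring

variable {x σ} in
lemma aa_mul_XX (hσ2 : σ * σ = 1) (hcj : ∀ j : ℕ, σ * x ^ j = (x ^ j)⁻¹ * σ)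
    (hinv : ∀ j : ℕ, ∃ m : ℕ, x ^ m = (x ^ j)⁻¹) (j : ℕ) :
    ∃ p ∈ Pspan x, ∃ m : ℕ, x ^ m = (x ^ j)⁻¹ ∧
      (aa σ : A) * XX x j = p * uu x ^ 2 + XX x m * aa σ := by
  haveI : CharP (MonoidAlgebra k D) 2 := myCharP (k := k) (D := D)
  obtain ⟨m, hm⟩ := hinv j
  obtain ⟨c, hc, hcu⟩ := XX_add_one (k := k) x j
  -- a * X j = X m * a + X m + X j
  have e1 : (aa σ : A) * XX x j = XX x m * aa σ + (XX x m + XX x j) := by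
    have h2 : (MonoidAlgebra.of k D σ) * XX x j = XX x m * MonoidAlgebra.of k D σ := by
      rw [XX, XX, ← map_mul, ← map_mul, hcj j, hm]
    rw [aa, add_mul, one_mul, h2, mul_add, mul_one]
    conv_rhs => rw [add_assoc, ← add_assoc (XX x m), CharTwo.add_self_eq_zero, zero_add]
  -- X m + X j = X m * (X j + 1)^2
  have e2 : (XX x m : A) + XX x j = XX x m * ((XX x j + 1) * (XX x j + 1)) := by
    have hsq : ((XX x j : A) + 1) * (XX x j + 1)
        = XX x j * XX x j + (XX x j + XX x j) + 1 := by noncomm_ring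
    rw [hsq, CharTwo.add_self_eq_zero, add_zero, XX_mul, mul_add, mul_one, XX_mul]
    have : x ^ (m + (j + j)) = x ^ j := by
      rw [pow_add, hm, pow_add, ← mul_assoc, inv_mul_cancel, one_mul]
    simp only [XX]
    rw [this, add_comm]
  -- (X j + 1)^2 = (c * c) * u^2
  have e3 : ((XX x j : A) + 1) * (XX x j + 1) = (c * c) * uu x ^ 2 := by
    rw [hcu]
    have hcu2 : (uu x : A) * c = c * uu x := (Pspan_comm_uu x hc).symm.eq
    calc (c * uu x : A) * (c * uu x) = c * (uu x * c) * uu x := by noncomm_ring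
      _ = c * (c * uu x) * uu x := by rw [hcu2]
      _ = (c * c) * uu x ^ 2 := by rw [pow_two]; noncomm_ring
  refine ⟨XX x m * (c * c), Pspan_mul x (XX_mem_Pspan x m) (Pspan_mul x hc hc), m, hm, ?_⟩
  rw [e1, e2, e3, ← mul_assoc, add_comm]

variable {x σ} in
lemma aa_mul_uu (hσ2 : σ * σ = 1) (hcj : ∀ j : ℕ, σ * x ^ j = (x ^ j)⁻¹ * σ)
    (hinv : ∀ j : ℕ, ∃ m : ℕ, x ^ m = (x ^ j)⁻¹) :
    ∃ p ∈ Pspan x, ∃ q ∈ Pspan x,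
      (aa σ : A) * uu x = p * uu x ^ 2 + q * uu x * aa σ := by
  haveI : CharP (MonoidAlgebra k D) 2 := myCharP (k := k) (D := D)
  obtain ⟨p, hp, m, hm, he⟩ := aa_mul_XX (k := k) (x := x) hσ2 hcj hinv 1
  obtain ⟨c, hc, hcu⟩ := XX_add_one (k := k) x m
  refine ⟨p, hp, c, hc, ?_⟩
  have h1 : (aa σ : A) * uu x = aa σ * XX x 1 + aa σ := by
    rw [uu_eq, mul_add, mul_one]
  rw [h1, he]
  calc p * uu x ^ 2 + XX x m * aa σ + aa σ
      = p * uu x ^ 2 + (XX x m + 1) * aa σ := by noncomm_ring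
    _ = p * uu x ^ 2 + c * uu x * aa σ := by rw [hcu]

lemma mul_pow_comm {c' : MonoidAlgebra k D} (hc' : c' ∈ Pspan x) (c : A) (r : ℕ) :
    c * uu x ^ r * c' = c * c' * uu x ^ r := by
  rw [mul_assoc, mul_assoc, ((Pspan_comm_uu x hc').pow_right r).symm.eq]

lemma Pspan_mul_pow {c : MonoidAlgebra k D} (hc : c ∈ Pspan x) (r : ℕ) :
    c * uu x ^ r ∈ Pspan x := by
  induction r with
  | zero => simpa using hc
  | succ n ih =>
    rw [pow_succ, ← mul_assoc]
    exact Pspan_mul x ih (uu_mem_Pspan x)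

/-- The filtration submodules -/
noncomputable def NN (n : ℕ) : Submodule k (MonoidAlgebra k D) :=
  Submodule.span k {z | ∃ i : ℕ,
    z = XX (k := k) x i * uu x ^ n ∨ z = XX (k := k) x i * uu x ^ (n - 1) * aa σ}

lemma mem_NN_1 {c : MonoidAlgebra k D} (hc : c ∈ Pspan x) {n j : ℕ} (hnj : n ≤ j) :
    c * uu x ^ j ∈ NN x σ n := by
  have hsplit : c * uu x ^ j = (c * uu x ^ (j - n)) * uu x ^ n := by
    rw [mul_assoc, ← pow_add]
    congr 2
    omega
  rw [hsplit]
  have hc2 : c * uu x ^ (j - n) ∈ Pspan x := Pspan_mul_pow x hc _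
  revert hc2
  generalize c * uu x ^ (j - n) = c2
  intro hc2
  induction hc2 using Submodule.span_induction with
  | mem z hz => obtain ⟨i, rfl⟩ := hz; exact Submodule.subset_span ⟨i, Or.inl rfl⟩
  | zero => rw [zero_mul]; exact Submodule.zero_mem _
  | add y z _ _ hy hz => rw [add_mul]; exact Submodule.add_mem _ hy hz
  | smul r y _ hy => rw [smul_mul_assoc]; exact Submodule.smul_mem _ r hy

lemma mem_NN_2 {c : MonoidAlgebra k D} (hc : c ∈ Pspan x) {n j : ℕ} (hnj : n - 1 ≤ j) :
    c * uu x ^ j * aa σ ∈ NN x σ n := by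
  have hsplit : c * uu x ^ j = (c * uu x ^ (j - (n - 1))) * uu x ^ (n - 1) := by
    rw [mul_assoc, ← pow_add]
    congr 2
    omega
  rw [hsplit]
  have hc2 : c * uu x ^ (j - (n - 1)) ∈ Pspan x := Pspan_mul_pow x hc _
  revert hc2
  generalize c * uu x ^ (j - (n - 1)) = c2
  intro hc2
  induction hc2 using Submodule.span_induction with
  | mem z hz => obtain ⟨i, rfl⟩ := hz; exact Submodule.subset_span ⟨i, Or.inr rfl⟩
  | zero => rw [zero_mul, zero_mul]; exact Submodule.zero_mem _
  | add y z _ _ hy hz => rw [add_mul, add_mul]; exact Submodule.add_mem _ hy hz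
  | smul r y _ hy =>
    rw [smul_mul_assoc, smul_mul_assoc]; exact Submodule.smul_mem _ r hy

variable {x σ} in
lemma NN_step (hσ2 : σ * σ = 1) (hcj : ∀ j : ℕ, σ * x ^ j = (x ^ j)⁻¹ * σ)
    (hinv : ∀ j : ℕ, ∃ m : ℕ, x ^ m = (x ^ j)⁻¹) {n : ℕ} (hn : 1 ≤ n) :
    (NN x σ n : Submodule k (MonoidAlgebra k D)) * NN x σ 1 ≤ NN x σ (n + 1) := by
  rw [NN, NN, Submodule.span_mul_span, Submodule.span_le]
  rintro w hw
  rw [Set.mem_mul] at hw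
  obtain ⟨y, hy, z, hz, rfl⟩ := hw
  obtain ⟨i, hy | hy⟩ := hy <;> obtain ⟨j, hz | hz⟩ := hz <;> subst hy hz
  · -- case A : (X i u^n) (X j u)
    have e : XX (k := k) x i * uu x ^ n * (XX x j * uu x ^ 1)
        = (XX x i * XX x j) * uu x ^ (n + 1) := by
      calc XX (k := k) x i * uu x ^ n * (XX x j * uu x ^ 1)
          = XX x i * (uu x ^ n * XX x j) * uu x ^ 1 := by noncomm_ring
        _ = XX x i * (XX x j * uu x ^ n) * uu x ^ 1 := by
            rw [((uu_comm_XX x j).pow_right n).symm.eq]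
        _ = (XX x i * XX x j) * uu x ^ (n + 1) := by
            rw [pow_one, pow_succ]; noncomm_ring
    rw [SetLike.mem_coe, e]
    exact mem_NN_1 x σ (Pspan_mul x (XX_mem_Pspan x i) (XX_mem_Pspan x j)) (le_refl (n+1))
  · -- case B : (X i u^n) (X j u^0 a)
    have e : XX (k := k) x i * uu x ^ n * (XX x j * uu x ^ (1 - 1) * aa σ)
        = (XX x i * XX x j) * uu x ^ n * aa σ := by
      simp only [Nat.sub_self, pow_zero, mul_one]
      calc XX (k := k) x i * uu x ^ n * (XX x j * aa σ)
          = XX x i * (uu x ^ n * XX x j) * aa σ := by noncomm_ring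
        _ = XX x i * (XX x j * uu x ^ n) * aa σ := by
            rw [((uu_comm_XX x j).pow_right n).symm.eq]
        _ = (XX x i * XX x j) * uu x ^ n * aa σ := by noncomm_ring
    rw [SetLike.mem_coe, e]
    refine mem_NN_2 x σ (Pspan_mul x (XX_mem_Pspan x i) (XX_mem_Pspan x j)) ?_
    omega
  · -- case C : (X i u^{n-1} a) (X j u)
    obtain ⟨p, hp, m, hm, haXj⟩ := aa_mul_XX (k := k) (x := x) hσ2 hcj hinv j
    obtain ⟨p', hp', q', hq', hau⟩ := aa_mul_uu (k := k) (x := x) hσ2 hcj hinv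
    have e : XX (k := k) x i * uu x ^ (n - 1) * aa σ * (XX x j * uu x ^ 1)
        = (XX x i * uu x ^ (n - 1) * p) * uu x ^ 3
          + ((XX x i * uu x ^ (n - 1) * XX x m * p') * uu x ^ 2
             + (XX x i * uu x ^ (n - 1) * XX x m * q') * uu x * aa σ) := by
      rw [pow_one]
      calc XX x i * uu x ^ (n - 1) * aa σ * (XX x j * uu x)
          = XX x i * uu x ^ (n - 1) * (aa σ * XX x j) * uu x := by noncomm_ring
        _ = XX x i * uu x ^ (n - 1) * (p * uu x ^ 2 + XX x m * aa σ) * uu x := by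
            rw [haXj]
        _ = (XX x i * uu x ^ (n - 1) * p) * uu x ^ 3
            + (XX x i * uu x ^ (n - 1) * XX x m) * (aa σ * uu x) := by noncomm_ring
        _ = (XX x i * uu x ^ (n - 1) * p) * uu x ^ 3
            + (XX x i * uu x ^ (n - 1) * XX x m) * (p' * uu x ^ 2 + q' * uu x * aa σ) := by
            rw [hau]
        _ = _ := by noncomm_ring
    rw [SetLike.mem_coe, e]
    refine Submodule.add_mem _ ?_ (Submodule.add_mem _ ?_ ?_)
    · rw [mul_pow_comm x hp]
      have e2 : XX (k := k) x i * p * uu x ^ (n - 1) * uu x ^ 3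
          = (XX x i * p) * uu x ^ (n + 2) := by
        rw [mul_assoc, ← pow_add]
        congr 2
        omega
      rw [e2]
      exact mem_NN_1 x σ (Pspan_mul x (XX_mem_Pspan x i) hp) (by omega)
    · rw [mul_pow_comm x (XX_mem_Pspan x m), mul_pow_comm x hp']
      have e2 : XX (k := k) x i * XX x m * p' * uu x ^ (n - 1) * uu x ^ 2
          = (XX x i * XX x m * p') * uu x ^ (n + 1) := by
        rw [mul_assoc, ← pow_add]
        congr 2
        omega
      rw [e2]
      exact mem_NN_1 x σ
        (Pspan_mul x (Pspan_mul x (XX_mem_Pspan x i) (XX_mem_Pspan x m)) hp') (by omega)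
    · rw [mul_pow_comm x (XX_mem_Pspan x m), mul_pow_comm x hq']
      have e2 : XX (k := k) x i * XX x m * q' * uu x ^ (n - 1) * uu x * aa σ
          = (XX x i * XX x m * q') * uu x ^ n * aa σ := by
        rw [mul_assoc (XX x i * XX x m * q'), ← pow_succ]
        congr 3
        omega
      rw [e2]
      exact mem_NN_2 x σ
        (Pspan_mul x (Pspan_mul x (XX_mem_Pspan x i) (XX_mem_Pspan x m)) hq') (by omega)
  · -- case D : (X i u^{n-1} a) (X j u^0 a)
    obtain ⟨p, hp, m, hm, haXj⟩ := aa_mul_XX (k := k) (x := x) hσ2 hcj hinv j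
    have e : XX (k := k) x i * uu x ^ (n - 1) * aa σ * (XX x j * uu x ^ (1 - 1) * aa σ)
        = (XX x i * uu x ^ (n - 1) * p) * uu x ^ 2 * aa σ
          + (XX x i * uu x ^ (n - 1) * XX x m) * (aa σ * aa σ) := by
      simp only [Nat.sub_self, pow_zero, mul_one]
      calc XX x i * uu x ^ (n - 1) * aa σ * (XX x j * aa σ)
          = XX x i * uu x ^ (n - 1) * (aa σ * XX x j) * aa σ := by noncomm_ring
        _ = XX x i * uu x ^ (n - 1) * (p * uu x ^ 2 + XX x m * aa σ) * aa σ := by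
            rw [haXj]
        _ = _ := by noncomm_ring
    rw [SetLike.mem_coe, e, aa_sq σ hσ2, mul_zero, add_zero, mul_pow_comm x hp]
    have e2 : XX (k := k) x i * p * uu x ^ (n - 1) * uu x ^ 2 * aa σ
        = (XX x i * p) * uu x ^ (n + 1) * aa σ := by
      rw [mul_assoc (XX x i * p) (uu x ^ (n-1)), ← pow_add]
      congr 3
      omega
    rw [e2]
    exact mem_NN_2 x σ (Pspan_mul x (XX_mem_Pspan x i) hp) (by omega)

lemma uu_pow_eq_zero {e : ℕ} (hx : x ^ (2 ^ e) = 1) : (uu x : A) ^ (2 ^ e) = 0 := by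
  haveI : CharP (MonoidAlgebra k D) 2 := myCharP
  haveI : Fact (Nat.Prime 2) := ⟨Nat.prime_two⟩
  rw [uu, add_pow_char_pow_of_commute 2 e (Commute.one_right _), one_pow,
    ← map_pow, hx, map_one]
  exact CharTwo.add_self_eq_zero 1

variable {x σ} in
lemma NN_top_eq_bot {e : ℕ} (hx : x ^ (2 ^ e) = 1) :
    (NN x σ (2 ^ e + 1) : Submodule k (MonoidAlgebra k D)) = ⊥ := by
  have hu : (uu x : A) ^ (2 ^ e) = 0 := uu_pow_eq_zero x hx
  rw [NN, eq_bot_iff, Submodule.span_le]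
  rintro w ⟨i, rfl | rfl⟩
  · rw [pow_succ', hu, mul_zero, mul_zero]
    exact Submodule.zero_mem ⊥
  · rw [Nat.add_sub_cancel, hu, mul_zero, zero_mul]
    exact Submodule.zero_mem ⊥

lemma uu_geom (m : ℕ) :
    (uu x : A) ^ (2 ^ m - 1) = ∑ i ∈ Finset.range (2 ^ m), XX x i := by
  haveI : CharP (MonoidAlgebra k D) 2 := myCharP
  haveI : Fact (Nat.Prime 2) := ⟨Nat.prime_two⟩
  induction m with
  | zero => simp [XX_zero]
  | succ n ih =>
    have h1 : 2 ^ (n + 1) - 1 = (2 ^ n - 1) + 2 ^ n := by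
      have : 1 ≤ 2 ^ n := Nat.one_le_two_pow
      omega
    have h2 : (uu x : A) ^ (2 ^ n) = XX x (2 ^ n) + 1 := by
      rw [uu, add_pow_char_pow_of_commute 2 n (Commute.one_right _), one_pow, ← map_pow]
      rfl
    rw [h1, pow_add, ih, h2]
    rw [mul_add, mul_one, Finset.sum_mul]
    have h3 : ∀ i ∈ Finset.range (2 ^ n), (XX x i : A) * XX x (2 ^ n)
        = XX x (i + 2 ^ n) := fun i _ => XX_mul x i _
    rw [Finset.sum_congr rfl h3]
    have h4 : (Finset.range (2 ^ (n + 1))) = Finset.range (2 ^ n) ∪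
        (Finset.range (2 ^ n)).map ⟨fun i => i + 2 ^ n, add_left_injective _⟩ := by
      ext t
      simp only [Finset.mem_range, Finset.mem_union, Finset.mem_map,
        Function.Embedding.coeFn_mk]
      constructor
      · intro ht
        by_cases h : t < 2 ^ n
        · exact Or.inl h
        · refine Or.inr ⟨t - 2 ^ n, ?_, ?_⟩ <;> [skip; omega]
          have : 2 ^ (n+1) = 2 ^ n + 2 ^ n := by ring
          omega
      · rintro (h | ⟨s, hs, rfl⟩) <;>
          [exact lt_of_lt_of_le h (Nat.pow_le_pow_right (by norm_num) (by omega));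
           skip]
        have : 2 ^ (n+1) = 2 ^ n + 2 ^ n := by ring
        omega
    rw [h4, Finset.sum_union, Finset.sum_map]
    · simp only [Function.Embedding.coeFn_mk]
      rw [add_comm]
    · rw [Finset.disjoint_left]
      rintro t ht hmem
      simp only [Finset.mem_range] at ht
      simp only [Finset.mem_map, Function.Embedding.coeFn_mk] at hmem
      obtain ⟨s, _, rfl⟩ := hmem
      omega

variable {x σ} in
lemma of_add_one_mem_NN1
    (hclass : ∀ g : D, (∃ i : ℕ, g = x ^ i) ∨ (∃ i : ℕ, g = x ^ i * σ)) (g : D) :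
    (MonoidAlgebra.of k D g + 1 : A) ∈ NN x σ 1 := by
  haveI : CharP (MonoidAlgebra k D) 2 := myCharP
  rcases hclass g with ⟨i, rfl⟩ | ⟨i, rfl⟩
  · obtain ⟨c, hc, hcu⟩ := XX_add_one (k := k) x i
    have : (MonoidAlgebra.of k D (x ^ i) + 1 : A) = c * uu x ^ 1 := by
      rw [pow_one, ← hcu]; rfl
    rw [this]
    exact mem_NN_1 x σ hc (le_refl 1)
  · have hsplit : (MonoidAlgebra.of k D (x ^ i * σ) + 1 : A)
        = XX x i * uu x ^ (1 - 1) * aa σ + (XX x i + 1) := by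
      have h1 : (MonoidAlgebra.of k D (x ^ i * σ) : A)
          = XX x i * MonoidAlgebra.of k D σ := by rw [XX, ← map_mul]
      have h2 : (MonoidAlgebra.of k D σ : A) = aa σ + 1 := by
        rw [aa, add_assoc, CharTwo.add_self_eq_zero, add_zero]
      rw [h1, h2]
      simp only [Nat.sub_self, pow_zero, mul_one, aa]
      noncomm_ring
    rw [hsplit]
    refine Submodule.add_mem _ (mem_NN_2 x σ (XX_mem_Pspan x i) (by omega)) ?_
    obtain ⟨c, hc, hcu⟩ := XX_add_one (k := k) x i
    rw [hcu, ← pow_one (uu x)]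
    exact mem_NN_1 x σ hc (le_refl 1)

/-- the augmentation map -/
noncomputable def eps : MonoidAlgebra k D →ₐ[k] k := MonoidAlgebra.lift k k D 1

lemma eps_of (g : D) : (eps : MonoidAlgebra k D →ₐ[k] k) (MonoidAlgebra.of k D g) = 1 := by
  rw [eps, MonoidAlgebra.lift_of]; rfl

variable {x σ} in
lemma ker_eps_le_NN1
    (hclass : ∀ g : D, (∃ i : ℕ, g = x ^ i) ∨ (∃ i : ℕ, g = x ^ i * σ))
    (z : MonoidAlgebra k D) (hz : (eps : MonoidAlgebra k D →ₐ[k] k) z = 0) :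
    z ∈ NN x σ 1 := by
  have main : ∀ w : MonoidAlgebra k D,
      w + algebraMap k (MonoidAlgebra k D) (eps w) ∈ NN x σ 1 := by
    intro w
    induction w using MonoidAlgebra.induction_on with
    | of g =>
      rw [eps_of, map_one]
      exact of_add_one_mem_NN1 hclass g
    | add f g hf hg =>
      have : f + g + algebraMap k (MonoidAlgebra k D) (eps (f + g))
          = (f + algebraMap k (MonoidAlgebra k D) (eps f))
            + (g + algebraMap k (MonoidAlgebra k D) (eps g)) := by
        rw [map_add, map_add]; abel
      rw [this]
      exact Submodule.add_mem _ hf hg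
    | smul r f hf =>
      have : r • f + algebraMap k (MonoidAlgebra k D) (eps (r • f))
          = r • (f + algebraMap k (MonoidAlgebra k D) (eps f)) := by
        rw [map_smul, smul_add, Algebra.smul_def, Algebra.smul_def, map_mul]
        simp [Algebra.smul_def]
      rw [this]
      exact Submodule.smul_mem _ r hf
  have := main z
  rwa [hz, map_zero, add_zero] at this
end Elem

section Main
variable (x σ : D)

/-- The augmentation ideal -/
noncomputable def Ik : Ideal (MonoidAlgebra k D) :=
  RingHom.ker (eps : MonoidAlgebra k D →ₐ[k] k).toRingHom

lemma mem_Ik {z : MonoidAlgebra k D} :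
    z ∈ (Ik : Ideal (MonoidAlgebra k D)) ↔ (eps : MonoidAlgebra k D →ₐ[k] k) z = 0 := by
  rw [Ik, RingHom.mem_ker]; rfl

lemma one_not_mem_Ik : (1 : MonoidAlgebra k D) ∉ (Ik : Ideal (MonoidAlgebra k D)) := by
  rw [mem_Ik, map_one]
  exact one_ne_zero

variable {x σ} in
lemma Ik_pow_le (hσ2 : σ * σ = 1) (hcj : ∀ j : ℕ, σ * x ^ j = (x ^ j)⁻¹ * σ)
    (hinv : ∀ j : ℕ, ∃ m : ℕ, x ^ m = (x ^ j)⁻¹)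
    (hclass : ∀ g : D, (∃ i : ℕ, g = x ^ i) ∨ (∃ i : ℕ, g = x ^ i * σ))
    {n : ℕ} (hn : 1 ≤ n) :
    ((Ik : Ideal (MonoidAlgebra k D)).restrictScalars k) ^ n ≤ NN x σ n := by
  induction n with
  | zero => omega
  | succ m ih =>
    by_cases hm : 1 ≤ m
    · calc ((Ik : Ideal (MonoidAlgebra k D)).restrictScalars k) ^ (m + 1)
          = ((Ik : Ideal (MonoidAlgebra k D)).restrictScalars k) ^ m *
            ((Ik : Ideal (MonoidAlgebra k D)).restrictScalars k) := by rw [pow_succ]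
        _ ≤ NN x σ m * NN x σ 1 := by
            refine mul_le_mul' (ih hm) ?_
            intro z hz
            exact ker_eps_le_NN1 hclass z (by rwa [Submodule.restrictScalars_mem, mem_Ik] at hz)
        _ ≤ NN x σ (m + 1) := NN_step hσ2 hcj hinv hm
    · have hm0 : m = 0 := by omega
      subst hm0
      rw [pow_one]
      intro z hz
      exact ker_eps_le_NN1 hclass z (by rwa [Submodule.restrictScalars_mem, mem_Ik] at hz)

variable {x σ} in
lemma Ik_nilpotent (hσ2 : σ * σ = 1) (hcj : ∀ j : ℕ, σ * x ^ j = (x ^ j)⁻¹ * σ)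
    (hinv : ∀ j : ℕ, ∃ m : ℕ, x ^ m = (x ^ j)⁻¹)
    (hclass : ∀ g : D, (∃ i : ℕ, g = x ^ i) ∨ (∃ i : ℕ, g = x ^ i * σ))
    {e : ℕ} (hxe : x ^ (2 ^ e) = 1)
    {z : MonoidAlgebra k D} (hz : z ∈ (Ik : Ideal (MonoidAlgebra k D))) :
    z ^ (2 ^ e + 1) = 0 := by
  have h1 : z ^ (2 ^ e + 1) ∈
      ((Ik : Ideal (MonoidAlgebra k D)).restrictScalars k) ^ (2 ^ e + 1) :=
    Submodule.pow_mem_pow _ (by rwa [Submodule.restrictScalars_mem]) _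
  have h2 := Ik_pow_le hσ2 hcj hinv hclass (n := 2 ^ e + 1) (Nat.le_add_left 1 (2 ^ e)) h1
  rw [NN_top_eq_bot (σ := σ) hxe] at h2
  simpa using h2

variable {x σ} in
lemma isUnit_of_not_mem_Ik (hσ2 : σ * σ = 1) (hcj : ∀ j : ℕ, σ * x ^ j = (x ^ j)⁻¹ * σ)
    (hinv : ∀ j : ℕ, ∃ m : ℕ, x ^ m = (x ^ j)⁻¹)
    (hclass : ∀ g : D, (∃ i : ℕ, g = x ^ i) ∨ (∃ i : ℕ, g = x ^ i * σ))
    {e : ℕ} (hxe : x ^ (2 ^ e) = 1)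
    {z : MonoidAlgebra k D} (hz : z ∉ (Ik : Ideal (MonoidAlgebra k D))) :
    IsUnit z := by
  set c : k := (eps : MonoidAlgebra k D →ₐ[k] k) z with hc
  have hcne : c ≠ 0 := by rwa [mem_Ik, ← hc] at hz
  set y : MonoidAlgebra k D := z - algebraMap k (MonoidAlgebra k D) c with hy
  have hymem : y ∈ (Ik : Ideal (MonoidAlgebra k D)) := by
    rw [mem_Ik, hy, map_sub, AlgHom.commutes]; simp [hc]
  have hynil : IsNilpotent y := ⟨2 ^ e + 1, Ik_nilpotent hσ2 hcj hinv hclass hxe hymem⟩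
  have hcu : IsUnit (algebraMap k (MonoidAlgebra k D) c) :=
    (hcne.isUnit).map (algebraMap k (MonoidAlgebra k D))
  have hzeq : z = algebraMap k (MonoidAlgebra k D) c + y := by rw [hy]; abel
  rw [hzeq]
  exact IsNilpotent.isUnit_add_left_of_commute hynil hcu
    ((Algebra.commutes c y).symm)

variable {x σ} in
lemma main_isLocalRing (hσ2 : σ * σ = 1) (hcj : ∀ j : ℕ, σ * x ^ j = (x ^ j)⁻¹ * σ)
    (hinv : ∀ j : ℕ, ∃ m : ℕ, x ^ m = (x ^ j)⁻¹)
    (hclass : ∀ g : D, (∃ i : ℕ, g = x ^ i) ∨ (∃ i : ℕ, g = x ^ i * σ))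
    {e : ℕ} (hxe : x ^ (2 ^ e) = 1) :
    IsLocalRing (MonoidAlgebra k D) := by
  refine { toNontrivial := inferInstance, isUnit_or_isUnit_of_add_one := ?_ }
  intro a b hab
  by_cases ha : a ∈ (Ik : Ideal (MonoidAlgebra k D))
  · right
    refine isUnit_of_not_mem_Ik hσ2 hcj hinv hclass hxe ?_
    intro hb
    exact one_not_mem_Ik (hab ▸ Ideal.add_mem _ ha hb)
  · exact Or.inl (isUnit_of_not_mem_Ik hσ2 hcj hinv hclass hxe ha)

variable {x σ} in
lemma Ik_isMaximal (hσ2 : σ * σ = 1) (hcj : ∀ j : ℕ, σ * x ^ j = (x ^ j)⁻¹ * σ)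
    (hinv : ∀ j : ℕ, ∃ m : ℕ, x ^ m = (x ^ j)⁻¹)
    (hclass : ∀ g : D, (∃ i : ℕ, g = x ^ i) ∨ (∃ i : ℕ, g = x ^ i * σ))
    {e : ℕ} (hxe : x ^ (2 ^ e) = 1) :
    (Ik : Ideal (MonoidAlgebra k D)).IsMaximal := by
  constructor
  constructor
  · intro htop
    exact one_not_mem_Ik (htop ▸ Submodule.mem_top)
  · intro J hJ
    obtain ⟨z, hzJ, hznI⟩ := SetLike.exists_of_lt hJ
    exact Ideal.eq_top_of_isUnit_mem J hzJ
      (isUnit_of_not_mem_Ik hσ2 hcj hinv hclass hxe hznI)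

variable {x σ} in
lemma jacobson_eq_Ik (hσ2 : σ * σ = 1) (hcj : ∀ j : ℕ, σ * x ^ j = (x ^ j)⁻¹ * σ)
    (hinv : ∀ j : ℕ, ∃ m : ℕ, x ^ m = (x ^ j)⁻¹)
    (hclass : ∀ g : D, (∃ i : ℕ, g = x ^ i) ∨ (∃ i : ℕ, g = x ^ i * σ))
    {e : ℕ} (hxe : x ^ (2 ^ e) = 1) :
    Ideal.jacobson (⊥ : Ideal (MonoidAlgebra k D)) = Ik := by
  have hmax := Ik_isMaximal (k := k) hσ2 hcj hinv hclass hxe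
  have huniq : ∀ J : Ideal (MonoidAlgebra k D), J.IsMaximal → J = Ik := by
    intro J hJ
    have hle : J ≤ Ik := by
      intro z hzJ
      by_contra hzI
      exact hJ.ne_top (Ideal.eq_top_of_isUnit_mem J hzJ
        (isUnit_of_not_mem_Ik hσ2 hcj hinv hclass hxe hzI))
    exact hJ.eq_of_le hmax.ne_top hle
  apply le_antisymm
  · exact sInf_le ⟨bot_le, hmax⟩
  · exact le_sInf fun J ⟨_, hJ⟩ => (huniq J hJ) ▸ le_refl _

variable {x σ} in
lemma w_ne_zero {e : ℕ} (horder : orderOf x = 2 ^ e)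
    (hσnot : σ ∉ Subgroup.zpowers x) :
    (uu x : MonoidAlgebra k D) ^ (2 ^ e - 1) * aa σ ≠ 0 := by
  classical
  rw [uu_geom]
  set F : MonoidAlgebra k D →ₗ[k] k := (Finsupp.lapply (1 : D)).comp (MonoidAlgebra.coeffLinearEquiv k).toLinearMap with hF
  intro h0
  have hw : ((∑ i ∈ Finset.range (2 ^ e), XX x i) * aa σ : MonoidAlgebra k D)
      = ∑ i ∈ Finset.range (2 ^ e),
          (MonoidAlgebra.of k D (x ^ i * σ) + MonoidAlgebra.of k D (x ^ i)) := by
    rw [Finset.sum_mul]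
    refine Finset.sum_congr rfl fun i _ => ?_
    rw [XX, aa, mul_add, mul_one, ← map_mul]
  rw [hw] at h0
  have h1 : F (∑ i ∈ Finset.range (2 ^ e),
      (MonoidAlgebra.of k D (x ^ i * σ) + MonoidAlgebra.of k D (x ^ i))) = 1 := by
    rw [map_sum]
    have hterm : ∀ i ∈ Finset.range (2 ^ e),
        F (MonoidAlgebra.of k D (x ^ i * σ) + MonoidAlgebra.of k D (x ^ i))
          = if i = 0 then 1 else 0 := by
      intro i hi
      rw [Finset.mem_range] at hi
      rw [map_add]
      have hFapp : ∀ g : D, F (MonoidAlgebra.of k D g) = if g = 1 then 1 else 0 := by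
        intro g
        rw [hF, MonoidAlgebra.of_apply]
        exact Finsupp.single_apply
      rw [hFapp, hFapp]
      have hne : x ^ i * σ ≠ 1 := by
        intro heq
        exact hσnot (by
          have : σ = (x ^ i)⁻¹ := eq_inv_of_mul_eq_one_right heq
          rw [this]
          exact Subgroup.inv_mem _ (Subgroup.npow_mem_zpowers x i))
      rw [if_neg hne, zero_add]
      by_cases hzero : i = 0
      · subst hzero
        rw [pow_zero, if_pos rfl, if_pos rfl]
      · rw [if_neg hzero, if_neg]
        intro hone
        have := orderOf_dvd_of_pow_eq_one hone
        rw [horder] at this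
        exact hzero (Nat.eq_zero_of_dvd_of_lt this hi)
    rw [Finset.sum_congr rfl hterm, Finset.sum_ite_eq' (Finset.range (2 ^ e)) 0 fun _ => (1:k)]
    rw [if_pos (Finset.mem_range.mpr (by positivity))]
  rw [h0, map_zero] at h1
  exact zero_ne_one h1

end Main
end RingPart


end Stmt2Aux

open MonoidAlgebra

/-- The Jacobson radical `J` of `kD` satisfies `J^(2^(d-1)) ≠ 0` and
`J^(2^(d-1)+1) = 0` (so the radical series of `kD` has length `2^(d-1)+1`);
moreover `kD` is indecomposable as a left module over itself (equivalently,
`kD` is a local ring). -/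
theorem stmt_2 {k : Type} [Field k] [IsAlgClosed k] [CharP k 2]
    {D : Type} [Group D] [Fintype D] (d : ℕ) (σ τ : D)
    (hd : 3 ≤ d) (hσ : σ ^ 2 = 1) (hτ : τ ^ 2 = 1)
    (hst : orderOf (σ * τ) = 2 ^ (d - 1)) (hgen : Subgroup.closure {σ, τ} = ⊤)
    (hcard : Fintype.card D = 2 ^ d) :
    ((Ideal.jacobson (⊥ : Ideal (MonoidAlgebra k D))).restrictScalars k) ^ (2 ^ (d - 1)) ≠ ⊥ ∧
    ((Ideal.jacobson (⊥ : Ideal (MonoidAlgebra k D))).restrictScalars k) ^ (2 ^ (d - 1) + 1) = ⊥ ∧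
    (∀ p q : Ideal (MonoidAlgebra k D), IsCompl p q → p = ⊥ ∨ q = ⊥) ∧
    IsLocalRing (MonoidAlgebra k D) := by
  open Stmt2Aux in
  have hσ2 : σ * σ = 1 := by rw [← sq]; exact hσ
  have hσinv : σ⁻¹ = σ := by rw [← mul_eq_one_iff_inv_eq, hσ2]
  have hτinv : τ⁻¹ = τ := by rw [← mul_eq_one_iff_inv_eq, ← sq, hτ]
  have hclass := Stmt2Aux.classify σ τ hσ hτ hgen
  have hσnot := Stmt2Aux.sigma_not_zpowers σ τ d hd hσ hτ hst hgen hcard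
  set x := σ * τ with hx
  have hc : σ * x = x⁻¹ * σ := by
    have h1 : σ * x = τ := by rw [hx, ← mul_assoc, hσ2, one_mul]
    have h2 : x⁻¹ * σ = τ := by rw [hx, mul_inv_rev, hσinv, hτinv, mul_assoc, hσ2, mul_one]
    rw [h1, h2]
  have hcj : ∀ j : ℕ, σ * x ^ j = (x ^ j)⁻¹ * σ := by
    intro j
    have := Stmt2Aux.dconj_zpow x σ hc (j : ℤ)
    rwa [zpow_natCast] at this
  have hinv : ∀ j : ℕ, ∃ m : ℕ, x ^ m = (x ^ j)⁻¹ := by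
    intro j
    have h1 : (x ^ j)⁻¹ ∈ Subgroup.zpowers x :=
      Subgroup.inv_mem _ (Subgroup.npow_mem_zpowers x j)
    rw [← mem_powers_iff_mem_zpowers] at h1
    obtain ⟨m, hm⟩ := h1
    exact ⟨m, hm⟩
  set e := d - 1 with he
  have horder : orderOf x = 2 ^ e := hst
  have hxe : x ^ (2 ^ e) = 1 := by rw [← horder]; exact pow_orderOf_eq_one x
  have hjac : Ideal.jacobson (⊥ : Ideal (MonoidAlgebra k D)) = Stmt2Aux.Ik :=
    Stmt2Aux.jacobson_eq_Ik hσ2 hcj hinv hclass hxe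
  have hloc : IsLocalRing (MonoidAlgebra k D) :=
    Stmt2Aux.main_isLocalRing hσ2 hcj hinv hclass hxe
  have h2e : 1 ≤ 2 ^ e := Nat.one_le_two_pow
  refine ⟨?_, ?_, ?_, hloc⟩
  · -- J ^ (2^e) ≠ ⊥
    rw [hjac]
    intro hbot
    have hu : Stmt2Aux.uu x ∈
        (Stmt2Aux.Ik : Ideal (MonoidAlgebra k D)).restrictScalars k := by
      rw [Submodule.restrictScalars_mem, Stmt2Aux.mem_Ik, Stmt2Aux.uu, map_add,
        Stmt2Aux.eps_of, map_one]
      exact CharTwo.add_self_eq_zero 1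
    have ha : Stmt2Aux.aa σ ∈
        (Stmt2Aux.Ik : Ideal (MonoidAlgebra k D)).restrictScalars k := by
      rw [Submodule.restrictScalars_mem, Stmt2Aux.mem_Ik, Stmt2Aux.aa, map_add,
        Stmt2Aux.eps_of, map_one]
      exact CharTwo.add_self_eq_zero 1
    have h1 : (Stmt2Aux.uu x : MonoidAlgebra k D) ^ (2 ^ e - 1) ∈
        ((Stmt2Aux.Ik : Ideal (MonoidAlgebra k D)).restrictScalars k) ^ (2 ^ e - 1) :=
      Submodule.pow_mem_pow _ hu _
    have h2 := Submodule.mul_mem_mul h1 ha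
    rw [← pow_succ] at h2
    have h3 : 2 ^ e - 1 + 1 = 2 ^ e := by omega
    rw [h3, hbot] at h2
    exact Stmt2Aux.w_ne_zero horder hσnot ((Submodule.mem_bot k).mp h2)
  · -- J ^ (2^e + 1) = ⊥
    rw [hjac]
    refine le_bot_iff.mp ?_
    calc ((Stmt2Aux.Ik : Ideal (MonoidAlgebra k D)).restrictScalars k) ^ (2 ^ e + 1)
        ≤ Stmt2Aux.NN x σ (2 ^ e + 1) :=
          Stmt2Aux.Ik_pow_le hσ2 hcj hinv hclass (Nat.le_add_left 1 (2 ^ e))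
      _ = ⊥ := Stmt2Aux.NN_top_eq_bot hxe
  · -- indecomposable
    intro p q hcompl
    have h1 : (1 : MonoidAlgebra k D) ∈ p ⊔ q := by
      rw [hcompl.sup_eq_top]; trivial
    rw [Submodule.mem_sup] at h1
    obtain ⟨y, hy, z, hz, hyz⟩ := h1
    haveI := hloc
    rcases IsLocalRing.isUnit_or_isUnit_of_add_one hyz with h | h
    · right
      have hp : p = ⊤ := Ideal.eq_top_of_isUnit_mem p hy h
      have := hcompl.inf_eq_bot
      rwa [hp, top_inf_eq] at this
    · left
      have hq : q = ⊤ := Ideal.eq_top_of_isUnit_mem q hz h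
      have := hcompl.inf_eq_bot
      rwa [hq, inf_top_eq] at this
end

section
/- If N is a kD-module which fits in a non-split short exact sequence of kD-modules 0 → k → N → k → 0 (with k the trivial module), then N is isomorphic to N_λ for some λ ∈ (k \ {0}) ∪ {σ, τ}. Moreover, for λ ∈ k \ {0} the restriction of N_λ to each of ⟨σ⟩ and ⟨τ⟩ is a free module of rank 1, while for λ ∈ {σ, τ}, writing {λ, λ'} = {σ, τ}, the restriction of N_λ to ⟨λ⟩ is free of rank 1 and the restriction of N_λ to ⟨λ'⟩ is the trivial module k². -/
open MonoidAlgebra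

lemma smul_asModule_single {k G V : Type} [Field k] [Group G] [AddCommGroup V] [Module k V]
    (ρ : Representation k G V) (g : G) (a : k) (x : ρ.asModule) :
    (MonoidAlgebra.single g a : MonoidAlgebra k G) • x
      = (show ρ.asModule from a • ρ g (show V from x)) := by
  show ρ.asAlgebraHom (MonoidAlgebra.single g a) x = _
  rw [Representation.asAlgebraHom_single]
  rfl

lemma pair_coeff {k V : Type} [Field k] [AddCommGroup V] [Module k V] (e : Module.Basis (Fin 2) k V)
    (a b : k) (h : a • e 0 + b • e 1 = 0) : a = 0 ∧ b = 0 := by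
  have h0 := congrArg (fun v => e.repr v 0) h
  have h1 := congrArg (fun v => e.repr v 1) h
  simp [Finsupp.single_apply] at h0 h1
  exact ⟨h0, h1⟩

lemma two_elt_dec {k C : Type} [Field k] [Group C] (g : C) (hg : g ≠ 1)
    (hall : ∀ x : C, x = 1 ∨ x = g) (r : MonoidAlgebra k C) :
    ∃ a b : k, r = MonoidAlgebra.single 1 a + MonoidAlgebra.single g b := by
  classical
  let r' : C →₀ k := r.coeff
  refine ⟨r' 1, r' g, ?_⟩
  apply MonoidAlgebra.coeff_injective
  show r' = Finsupp.single 1 (r' 1) + Finsupp.single g (r' g)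
  ext x
  rcases hall x with h | h <;> subst h <;>
    simp [Finsupp.single_apply, hg, Ne.symm hg]

lemma free_rank_one {k C V : Type} [Field k] [Group C] [AddCommGroup V] [Module k V]
    (ρ : Representation k C V) (g : C) (hg : g ≠ 1) (hall : ∀ x : C, x = 1 ∨ x = g)
    (e : Module.Basis (Fin 2) k V) (μ : k) (hμ : μ ≠ 0)
    (h0 : ρ g (e 0) = e 0) (h1 : ρ g (e 1) = μ • e 0 + e 1) :
    Nonempty (ρ.asModule ≃ₗ[MonoidAlgebra k C] MonoidAlgebra k C) := by
  let E1 : ρ.asModule := (show ρ.asModule from e 1)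
  let φ : MonoidAlgebra k C →ₗ[MonoidAlgebra k C] ρ.asModule :=
    { toFun := fun r => r • E1
      map_add' := fun a b => add_smul a b E1
      map_smul' := fun r s => mul_smul r s E1 }
  have hφ : ∀ a b : k, φ (MonoidAlgebra.single (1 : C) a + MonoidAlgebra.single g b)
      = (show ρ.asModule from (b * μ) • e 0 + (a + b) • e 1) := by
    intro a b
    have : φ (MonoidAlgebra.single (1 : C) a + MonoidAlgebra.single g b)
        = MonoidAlgebra.single (1 : C) a • E1 + MonoidAlgebra.single g b • E1 :=
      add_smul _ _ E1
    rw [this, smul_asModule_single, smul_asModule_single]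
    show (a • ρ 1 (e 1) + b • ρ g (e 1) : V) = _
    rw [map_one, h1]
    show (a • e 1 + b • (μ • e 0 + e 1) : V) = (b * μ) • e 0 + (a + b) • e 1
    module
  have hinj : Function.Injective φ := by
    have key : ∀ r, φ r = 0 → r = 0 := by
      intro r hr
      obtain ⟨a, b, hab⟩ := two_elt_dec g hg hall r
      rw [hab, hφ] at hr
      have h2 : ((b * μ) • e 0 + (a + b) • e 1 : V) = 0 := hr
      obtain ⟨ha, hb⟩ := pair_coeff e _ _ h2
      have hbz : b = 0 := by
        rcases mul_eq_zero.mp ha with h | h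
        · exact h
        · exact absurd h hμ
      have haz : a = 0 := by rw [hbz, add_zero] at hb; exact hb
      rw [hab, hbz, haz]
      simp
    intro x y hxy
    have h3 : φ (x - y) = 0 := by rw [map_sub, hxy, sub_self]
    exact sub_eq_zero.mp (key _ h3)
  have hsurj : Function.Surjective φ := by
    intro v
    set a := e.repr (show V from v) 0 with ha
    set b := e.repr (show V from v) 1 with hb
    refine ⟨MonoidAlgebra.single (1 : C) (b - a * μ⁻¹) + MonoidAlgebra.single g (a * μ⁻¹), ?_⟩
    rw [hφ]
    show ((a * μ⁻¹ * μ) • e 0 + (b - a * μ⁻¹ + a * μ⁻¹) • e 1 : V) = v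
    have hv : (a • e 0 + b • e 1 : V) = (show V from v) := by
      have := Module.Basis.sum_repr e (show V from v)
      rw [Fin.sum_univ_two] at this
      exact this
    rw [show a * μ⁻¹ * μ = a by field_simp, show b - a * μ⁻¹ + a * μ⁻¹ = b by ring]
    exact hv
  exact ⟨(LinearEquiv.ofBijective φ ⟨hinj, hsurj⟩).symm⟩

lemma triv_smul_eq {k C W : Type} [Field k] [Group C] [AddCommGroup W] [Module k W]
    (ρW : Representation k C W) (htriv : ∀ (x : C) (w : W), ρW x w = w)
    (r : MonoidAlgebra k C) (x : ρW.asModule) :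
    r • x = (show ρW.asModule from (r.coeff.sum fun _ a => a) • (show W from x)) := by
  show ρW.asAlgebraHom r x = _
  show ρW.asAlgebraHom r x = (r.coeff.sum fun _ a => a) • (show W from x)
  rw [Representation.asAlgebraHom_def, MonoidAlgebra.lift_apply]
  simp [Finsupp.sum, Finset.sum_apply, htriv, Finset.sum_smul, LinearMap.coe_sum, LinearMap.smul_apply]
  erw [Finset.sum_apply]
  erw [Finset.sum_smul]
  exact Finset.sum_congr rfl fun y _ => congrArg (fun w : W => r.coeff y • w) (htriv y x)

lemma triv_two_iso {k C V : Type} [Field k] [Group C] [AddCommGroup V] [Module k V]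
    (ρ : Representation k C V) (htriv : ∀ (x : C) (v : V), ρ x v = v)
    (e : Module.Basis (Fin 2) k V) :
    Nonempty (ρ.asModule ≃ₗ[MonoidAlgebra k C]
      (Representation.trivial k (G := C) (V := Fin 2 → k)).asModule) := by
  refine ⟨{ toFun := fun x => show (Representation.trivial k (G := C) (V := Fin 2 → k)).asModule
              from e.equivFun (show V from x),
            invFun := fun v => show ρ.asModule from e.equivFun.symm (show (Fin 2 → k) from v),
            left_inv := fun x => e.equivFun.symm_apply_apply (show V from x),
            right_inv := fun v => e.equivFun.apply_symm_apply (show (Fin 2 → k) from v),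
            map_add' := fun x y => by
              show (e.equivFun ((show V from x) + (show V from y)) : Fin 2 → k) = _
              rw [map_add]; rfl,
            map_smul' := fun r x => ?_ }⟩
  show (e.equivFun (show V from r • x) : Fin 2 → k)
      = r • (show (Representation.trivial k (G := C) (V := Fin 2 → k)).asModule
          from e.equivFun (show V from x))
  rw [triv_smul_eq ρ htriv, triv_smul_eq _ (fun x w => rfl)]
  show (e.equivFun ((r.coeff.sum fun _ a => a) • (show V from x)) : Fin 2 → k)
      = (r.coeff.sum fun _ a => a) • (e.equivFun (show V from x))
  rw [map_smul]

lemma zpow_two_cases {D : Type} [Group D] (c : D) (hc : c ^ 2 = 1) (m : ℤ) :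
    c ^ m = 1 ∨ c ^ m = c := by
  have h2 : c ^ (2 : ℤ) = 1 := by
    rw [show (2:ℤ) = ((2:ℕ):ℤ) by norm_num, zpow_natCast, hc]
  rcases Int.even_or_odd m with ⟨t, ht⟩ | ⟨t, ht⟩
  · left; subst ht; rw [← two_mul, zpow_mul, h2, one_zpow]
  · right; subst ht; rw [zpow_add, zpow_mul, h2, one_zpow, one_mul, zpow_one]

lemma zpowers_cases {D : Type} [Group D] (c : D) (hc : c ^ 2 = 1)
    (x : ↥(Subgroup.zpowers c)) : x = 1 ∨ x = ⟨c, Subgroup.mem_zpowers c⟩ := by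
  obtain ⟨m, hm⟩ := Subgroup.mem_zpowers_iff.mp x.2
  rcases zpow_two_cases c hc m with h | h
  · left; exact Subtype.ext (by rw [← hm]; exact h)
  · right; exact Subtype.ext (by rw [← hm]; exact h)

/-- the subgroup of elements fixing a vector -/
def fixSubgroup {k D V : Type} [Field k] [Group D] [AddCommGroup V] [Module k V]
    (ρ : Representation k D V) (v : V) : Subgroup D where
  carrier := {g | ρ g v = v}
  one_mem' := by show ρ 1 v = v; rw [map_one]; rfl
  mul_mem' := by
    intro a b ha hb
    show ρ (a * b) v = v
    have ha' : ρ a v = v := ha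
    have hb' : ρ b v = v := hb
    rw [map_mul]
    show ρ a (ρ b v) = v
    rw [hb', ha']
  inv_mem' := by
    intro a ha
    have ha' : ρ a v = v := ha
    show ρ a⁻¹ v = v
    calc ρ a⁻¹ v = ρ a⁻¹ (ρ a v) := by rw [ha']
    _ = ρ (a⁻¹ * a) v := by rw [map_mul]; rfl
    _ = v := by rw [inv_mul_cancel, map_one]; rfl

lemma fixed_smul_eq {k D V : Type} [Field k] [Group D] [AddCommGroup V] [Module k V]
    (ρ : Representation k D V) (v : V) (hv : ∀ g, ρ g v = v)
    (r : MonoidAlgebra k D) (c : k) :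
    r • (show ρ.asModule from c • v) = (show ρ.asModule from ((r.coeff.sum fun _ a => a) * c) • v) := by
  show ρ.asAlgebraHom r (c • v) = ((r.coeff.sum fun _ a => a) * c) • v
  rw [Representation.asAlgebraHom_def, MonoidAlgebra.lift_apply]
  simp only [Finsupp.sum, Finset.sum_apply, LinearMap.coe_sum, LinearMap.smul_apply,
    map_smul, hv, Finset.sum_smul, Finset.smul_sum, smul_smul]
  rw [Finset.sum_mul, Finset.sum_smul]
  exact Finset.sum_congr rfl fun x _ => by rw [mul_comm]

section
variable (k : Type) [Field k] (D : Type) [Group D]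

/-- The trivial `kD`-module `k`. -/
noncomputable abbrev kTriv : Type := (Representation.trivial k (G := D) (V := k)).asModule

noncomputable instance : AddCommGroup (kTriv k D) := inferInstanceAs (AddCommGroup k)

/-- Restriction of a representation of `D` to a subgroup `C ≤ D`. -/
noncomputable def resRep {V : Type} [AddCommMonoid V] [Module k V]
    (ρ : Representation k D V) (C : Subgroup D) : Representation k ↥C V := ρ.comp C.subtype

lemma part1 (σ τ : D) (hgen : Subgroup.closure {σ, τ} = ⊤)
    (N : Type) [AddCommGroup N] [Module k N] (ρN : Representation k D N)
    (h : ∃ (ι : kTriv k D →ₗ[MonoidAlgebra k D] ρN.asModule)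
         (p : ρN.asModule →ₗ[MonoidAlgebra k D] kTriv k D),
        Function.Injective ι ∧ Function.Surjective p ∧
        LinearMap.range ι = LinearMap.ker p ∧
        ¬ ∃ s : kTriv k D →ₗ[MonoidAlgebra k D] ρN.asModule, p ∘ₗ s = LinearMap.id) :
    ∃ e : Module.Basis (Fin 2) k N,
      (∃ lam : k, lam ≠ 0 ∧
        ρN σ (e 0) = e 0 ∧ ρN σ (e 1) = e 0 + e 1 ∧
        ρN τ (e 0) = e 0 ∧ ρN τ (e 1) = lam • e 0 + e 1) ∨
      (ρN σ (e 0) = e 0 ∧ ρN σ (e 1) = e 0 + e 1 ∧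
        ρN τ (e 0) = e 0 ∧ ρN τ (e 1) = e 1) ∨
      (ρN τ (e 0) = e 0 ∧ ρN τ (e 1) = e 0 + e 1 ∧
        ρN σ (e 0) = e 0 ∧ ρN σ (e 1) = e 1) := by
  classical
  obtain ⟨ι, p, hinj, hsurj, hrange, hns⟩ := h
  let I : k → N := fun x => ι x
  let P : N → k := fun n => p n
  have hI_rho : ∀ (g : D) (x : k), ρN g (I x) = I x := by
    intro g x
    have h1 := ι.map_smul (MonoidAlgebra.single g (1 : k)) (show kTriv k D from x)
    rw [smul_asModule_single, smul_asModule_single] at h1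
    simp only [one_smul, smul_eq_mul, Representation.trivial_apply, map_one, Module.End.one_apply, one_mul] at h1; exact h1.symm
  have hI_smul : ∀ a x : k, I (a * x) = a • I x := by
    intro a x
    have h1 := ι.map_smul (MonoidAlgebra.single (1 : D) a) (show kTriv k D from x)
    rw [smul_asModule_single, smul_asModule_single] at h1
    simp only [one_smul, smul_eq_mul, Representation.trivial_apply, map_one, Module.End.one_apply, one_mul] at h1; exact h1
  have hIx : ∀ x : k, I x = x • I 1 := by
    intro x
    have := hI_smul x 1
    rwa [mul_one] at this
  have he0 : I 1 ≠ 0 := by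
    intro hz
    have h2 : ι ((1 : k) : kTriv k D) = ι (0 : kTriv k D) := by rw [map_zero]; exact hz
    exact one_ne_zero (α := k) (hinj h2)
  have hP_rho : ∀ (g : D) (n : N), P (ρN g n) = P n := by
    intro g n
    have h1 := p.map_smul (MonoidAlgebra.single g (1 : k)) (show ρN.asModule from n)
    rw [smul_asModule_single, smul_asModule_single] at h1
    simp only [one_smul, smul_eq_mul, Representation.trivial_apply, map_one, Module.End.one_apply, one_mul] at h1; exact h1
  have hP_smul : ∀ (a : k) (n : N), P (a • n) = a * P n := by
    intro a n
    have h1 := p.map_smul (MonoidAlgebra.single (1 : D) a) (show ρN.asModule from n)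
    rw [smul_asModule_single, smul_asModule_single] at h1
    simp only [one_smul, smul_eq_mul, Representation.trivial_apply, map_one, Module.End.one_apply, one_mul] at h1; exact h1
  have hP_add : ∀ m n : N, P (m + n) = P m + P n := fun m n => map_add p m n
  have hP_sub : ∀ m n : N, P (m - n) = P m - P n := fun m n => map_sub p m n
  have hPI : ∀ x : k, P (I x) = 0 := by
    intro x
    have hmem : (show ρN.asModule from I x) ∈ LinearMap.ker p := by
      rw [← hrange]; exact ⟨x, rfl⟩
    exact (LinearMap.mem_ker (f := p)).mp hmem
  have hker : ∀ n : N, P n = 0 → ∃ x : k, I x = n := by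
    intro n hn
    have h1 : (show ρN.asModule from n) ∈ LinearMap.ker p := (LinearMap.mem_ker (f := p)).mpr hn
    rw [← hrange] at h1
    obtain ⟨x, hx⟩ := h1
    exact ⟨x, hx⟩
  obtain ⟨e1, he1⟩ : ∃ n : N, P n = 1 := hsurj (show kTriv k D from (1 : k))
  -- basis construction
  have hbasis : ∀ n : N, P n ≠ 0 → ∃ e : Module.Basis (Fin 2) k N, e 0 = I 1 ∧ e 1 = n := by
    intro n hn
    have hli : LinearIndependent k ![I 1, n] := by
      rw [LinearIndependent.pair_iff]
      intro s t hst
      have h1 : P (s • I 1 + t • n) = 0 := by rw [hst]; exact map_zero p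
      rw [hP_add, hP_smul, hP_smul, hPI, mul_zero, zero_add] at h1
      have ht : t = 0 := by
        rcases mul_eq_zero.mp h1 with h | h
        · exact h
        · exact absurd h hn
      have hs : s = 0 := by
        rw [ht, zero_smul, add_zero] at hst
        rcases smul_eq_zero.mp hst with h | h
        · exact h
        · exact absurd h he0
      exact ⟨hs, ht⟩
    have hsp : ⊤ ≤ Submodule.span k (Set.range ![I 1, n]) := by
      intro v _
      have hv : P (v - (P v * (P n)⁻¹) • n) = 0 := by
        rw [hP_sub, hP_smul]
        field_simp
        simp
      obtain ⟨x, hx⟩ := hker _ hv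
      have hveq : v = x • I 1 + (P v * (P n)⁻¹) • n := by
        rw [← hIx]
        rw [hx]
        ring_nf
        abel
      have hrange2 : Set.range ![I 1, n] = {I 1, n} := by
        simp [Matrix.range_cons, Matrix.range_empty, Set.pair_comm]
      rw [hrange2]
      exact Submodule.mem_span_pair.mpr ⟨x, P v * (P n)⁻¹, hveq.symm⟩
    refine ⟨Module.Basis.mk hli hsp, ?_, ?_⟩
    · rw [Module.Basis.mk_apply]; rfl
    · rw [Module.Basis.mk_apply]; rfl
  -- the coefficients
  have ha : ∀ g : D, ∃ a : k, ρN g e1 = a • I 1 + e1 := by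
    intro g
    have h1 : P (ρN g e1 - e1) = 0 := by rw [hP_sub, hP_rho, sub_self]
    obtain ⟨x, hx⟩ := hker _ h1
    refine ⟨x, ?_⟩
    rw [← hIx, hx]
    abel
  obtain ⟨aσ, haσ⟩ := ha σ
  obtain ⟨aτ, haτ⟩ := ha τ
  by_cases hσ0 : aσ = 0
  · by_cases hτ0 : aτ = 0
    · -- split: contradiction
      exfalso
      apply hns
      rw [hσ0, zero_smul, zero_add] at haσ
      rw [hτ0, zero_smul, zero_add] at haτ
      have hfix : ∀ g : D, ρN g e1 = e1 := by
        intro g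
        have hle : Subgroup.closure {σ, τ} ≤ fixSubgroup ρN e1 := by
          rw [Subgroup.closure_le]
          intro x hx
          rcases hx with h | h
          · rw [h]; exact haσ
          · rw [Set.mem_singleton_iff.mp h]; exact haτ
        rw [hgen] at hle
        exact hle (Subgroup.mem_top g)
      refine ⟨{ toFun := fun x => (show ρN.asModule from (show k from x) • e1),
                map_add' := fun x y => add_smul (show k from x) (show k from y) e1,
                map_smul' := fun r x => ?_ }, ?_⟩
      · show ((show k from r • x) • e1 : N)
            = r • (show ρN.asModule from (show k from x) • e1)
        rw [triv_smul_eq _ (fun _ _ => rfl) r x,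
          fixed_smul_eq ρN e1 hfix r (show k from x)]
        show (((r.coeff.sum fun _ a => a) • (show k from x)) • e1 : N)
            = ((r.coeff.sum fun _ a => a) * (show k from x)) • e1
        rw [smul_eq_mul]
      · apply LinearMap.ext
        intro x
        show P ((show k from x) • e1) = (show k from x)
        rw [hP_smul, he1, mul_one]
    · -- aσ = 0, aτ ≠ 0 : third disjunct
      obtain ⟨e, he0', he1'⟩ := hbasis (aτ⁻¹ • e1)
        (by rw [hP_smul, he1, mul_one]; exact inv_ne_zero hτ0)
      have hρτ1 : ρN τ (aτ⁻¹ • e1) = I 1 + aτ⁻¹ • e1 := by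
        rw [map_smul, haτ, smul_add, smul_smul, inv_mul_cancel₀ hτ0, one_smul]
      have hρσ1 : ρN σ (aτ⁻¹ • e1) = aτ⁻¹ • e1 := by
        rw [map_smul, haσ, hσ0, zero_smul, zero_add]
      refine ⟨e, Or.inr (Or.inr ?_)⟩
      rw [he0', he1']
      exact ⟨hI_rho τ 1, by rw [hρτ1], hI_rho σ 1, hρσ1⟩
  · -- aσ ≠ 0
    obtain ⟨e, he0', he1'⟩ := hbasis (aσ⁻¹ • e1)
      (by rw [hP_smul, he1, mul_one]; exact inv_ne_zero hσ0)
    have hρσ1 : ρN σ (aσ⁻¹ • e1) = I 1 + aσ⁻¹ • e1 := by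
      rw [map_smul, haσ, smul_add, smul_smul, inv_mul_cancel₀ hσ0, one_smul]
    have hρτ1 : ρN τ (aσ⁻¹ • e1) = (aτ * aσ⁻¹) • I 1 + aσ⁻¹ • e1 := by
      rw [map_smul, haτ, smul_add, smul_smul, mul_comm]
    refine ⟨e, ?_⟩
    by_cases hτ0 : aτ = 0
    · right; left
      rw [he0', he1']
      exact ⟨hI_rho σ 1, by rw [hρσ1], hI_rho τ 1,
        by rw [hρτ1, hτ0, zero_mul, zero_smul, zero_add]⟩
    · left
      refine ⟨aτ * aσ⁻¹, mul_ne_zero hτ0 (inv_ne_zero hσ0), ?_, ?_, ?_, ?_⟩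
      · rw [he0']; exact hI_rho σ 1
      · rw [he0', he1']; exact hρσ1
      · rw [he0']; exact hI_rho τ 1
      · rw [he0', he1']; exact hρτ1
/-- If `N` is a `kD`-module fitting in a non-split short exact sequence
`0 → k → N → k → 0` of `kD`-modules, then `N ≅ N_λ` for some
`λ ∈ (k \ {0}) ∪ {σ, τ}`; i.e. `N` has a `k`-basis `(e₀, e₁)` in which `σ` and `τ` act
by the matrices `[[1,1],[0,1]]` and `[[1,λ],[0,1]]` (for some `0 ≠ λ ∈ k`), or one of
`σ, τ` acts by `[[1,1],[0,1]]` and the other acts trivially.  Moreover, for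
`λ ∈ k \ {0}` the restriction of `N_λ` to each of `⟨σ⟩`, `⟨τ⟩` is free of rank 1, while
for `λ ∈ {σ, τ}` (writing `{λ, λ'} = {σ, τ}`) the restriction of `N_λ` to `⟨λ⟩` is free
of rank 1 and the restriction of `N_λ` to `⟨λ'⟩` is the trivial module `k²`. -/
theorem stmt_14 [IsAlgClosed k] [CharP k 2] [Fintype D] (d : ℕ) (σ τ : D)
    (hd : 3 ≤ d) (hσ : σ ^ 2 = 1) (hτ : τ ^ 2 = 1)
    (hst : orderOf (σ * τ) = 2 ^ (d - 1)) (hgen : Subgroup.closure {σ, τ} = ⊤)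
    (hcard : Fintype.card D = 2 ^ d) :
    -- classification of non-split self-extensions of `k`
    (∀ (N : Type) [AddCommGroup N] [Module k N] (ρN : Representation k D N),
      (∃ (ι : kTriv k D →ₗ[MonoidAlgebra k D] ρN.asModule)
         (p : ρN.asModule →ₗ[MonoidAlgebra k D] kTriv k D),
        Function.Injective ι ∧ Function.Surjective p ∧
        LinearMap.range ι = LinearMap.ker p ∧
        ¬ ∃ s : kTriv k D →ₗ[MonoidAlgebra k D] ρN.asModule, p ∘ₗ s = LinearMap.id) →
      ∃ e : Module.Basis (Fin 2) k N,
        (∃ lam : k, lam ≠ 0 ∧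
          ρN σ (e 0) = e 0 ∧ ρN σ (e 1) = e 0 + e 1 ∧
          ρN τ (e 0) = e 0 ∧ ρN τ (e 1) = lam • e 0 + e 1) ∨
        (ρN σ (e 0) = e 0 ∧ ρN σ (e 1) = e 0 + e 1 ∧
          ρN τ (e 0) = e 0 ∧ ρN τ (e 1) = e 1) ∨
        (ρN τ (e 0) = e 0 ∧ ρN τ (e 1) = e 0 + e 1 ∧
          ρN σ (e 0) = e 0 ∧ ρN σ (e 1) = e 1)) ∧
    -- restrictions of `N_λ` for `λ ∈ k \ {0}`
    (∀ (N : Type) [AddCommGroup N] [Module k N] (ρN : Representation k D N)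
       (e : Module.Basis (Fin 2) k N) (lam : k), lam ≠ 0 →
      ρN σ (e 0) = e 0 → ρN σ (e 1) = e 0 + e 1 →
      ρN τ (e 0) = e 0 → ρN τ (e 1) = lam • e 0 + e 1 →
      ∀ c : D, c = σ ∨ c = τ →
        Nonempty ((resRep k D ρN (Subgroup.zpowers c)).asModule
          ≃ₗ[MonoidAlgebra k ↥(Subgroup.zpowers c)]
            MonoidAlgebra k ↥(Subgroup.zpowers c))) ∧
    -- restrictions of `N_λ` for `λ ∈ {σ, τ}`, with `{λ, λ'} = {σ, τ}`
    (∀ (N : Type) [AddCommGroup N] [Module k N] (ρN : Representation k D N)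
       (e : Module.Basis (Fin 2) k N) (lam lam' : D),
      ((lam = σ ∧ lam' = τ) ∨ (lam = τ ∧ lam' = σ)) →
      ρN lam (e 0) = e 0 → ρN lam (e 1) = e 0 + e 1 →
      ρN lam' (e 0) = e 0 → ρN lam' (e 1) = e 1 →
      Nonempty ((resRep k D ρN (Subgroup.zpowers lam)).asModule
        ≃ₗ[MonoidAlgebra k ↥(Subgroup.zpowers lam)]
          MonoidAlgebra k ↥(Subgroup.zpowers lam)) ∧
      Nonempty ((resRep k D ρN (Subgroup.zpowers lam')).asModule
        ≃ₗ[MonoidAlgebra k ↥(Subgroup.zpowers lam')]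
          (Representation.trivial k (G := ↥(Subgroup.zpowers lam'))
            (V := Fin 2 → k)).asModule)) := by
  refine ⟨fun N _ _ ρN h => part1 k D σ τ hgen N ρN h, ?_, ?_⟩
  · -- part 2
    intro N _ _ ρN e lam hlam hs0 hs1 ht0 ht1 c hc
    obtain ⟨μ, hμ, hc0, hc1, hcc⟩ : ∃ μ : k, μ ≠ 0 ∧ ρN c (e 0) = e 0 ∧
        ρN c (e 1) = μ • e 0 + e 1 ∧ c ^ 2 = 1 := by
      rcases hc with rfl | rfl
      · exact ⟨1, one_ne_zero, hs0, by rw [one_smul]; exact hs1, hσ⟩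
      · exact ⟨lam, hlam, ht0, ht1, hτ⟩
    have hc1ne : c ≠ 1 := by
      intro hone
      rw [hone, map_one] at hc1
      have h2 : (e 1 : N) = μ • e 0 + e 1 := hc1
      rcases smul_eq_zero.mp (right_eq_add.mp h2) with h | h
      · exact hμ h
      · exact e.ne_zero 0 h
    have hgne : (⟨c, Subgroup.mem_zpowers c⟩ : ↥(Subgroup.zpowers c)) ≠ 1 := by
      intro h2
      exact hc1ne (congrArg Subtype.val h2)
    exact free_rank_one (resRep k D ρN (Subgroup.zpowers c))
      ⟨c, Subgroup.mem_zpowers c⟩ hgne (zpowers_cases c hcc) e μ hμ hc0 hc1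
  · -- part 3
    intro N _ _ ρN e lam lam' hcase h0 h1 h0' h1'
    constructor
    · -- restriction to ⟨lam⟩ is free
      have hll : lam ^ 2 = 1 := by
        rcases hcase with ⟨rfl, rfl⟩ | ⟨rfl, rfl⟩
        exacts [hσ, hτ]
      have hlne : lam ≠ 1 := by
        intro hone
        rw [hone, map_one] at h1
        have h2 : (e 1 : N) = e 0 + e 1 := h1
        exact e.ne_zero 0 (right_eq_add.mp h2)
      have hgne : (⟨lam, Subgroup.mem_zpowers lam⟩ : ↥(Subgroup.zpowers lam)) ≠ 1 := by
        intro h2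
        exact hlne (congrArg Subtype.val h2)
      exact free_rank_one (resRep k D ρN (Subgroup.zpowers lam))
        ⟨lam, Subgroup.mem_zpowers lam⟩ hgne (zpowers_cases lam hll) e 1 one_ne_zero
        h0 (by rw [one_smul]; exact h1)
    · -- restriction to ⟨lam'⟩ is trivial
      have hid : ρN lam' = LinearMap.id := by
        apply e.ext
        intro i
        fin_cases i
        · exact h0'
        · exact h1'
      have htriv : ∀ (x : ↥(Subgroup.zpowers lam')) (v : N),
          (resRep k D ρN (Subgroup.zpowers lam')) x v = v := by
        intro x v
        have hle : Subgroup.zpowers lam' ≤ fixSubgroup ρN v :=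
          Subgroup.zpowers_le.mpr (show ρN lam' v = v by rw [hid]; rfl)
        exact hle x.2
      exact triv_two_iso (resRep k D ρN (Subgroup.zpowers lam')) htriv e


end
end

section
/- Let R be a complete local commutative Noetherian ring with residue field k, and let U be an RD-module which is finitely generated and free as an R-module, such that k ⊗_R U is an endo-trivial kD-module. Then the RD-module U^* ⊗_R U ≅ Hom_R(U, U), with D acting by conjugation, is isomorphic to the direct sum of the trivial RD-module R and a free RD-module. -/
open MonoidAlgebra TensorProduct

section
variable (k : Type) [Field k] (D : Type) [Group D]

/-- The socle of a module: the sum of all simple submodules. -/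
def socle (R M : Type) [Ring R] [AddCommGroup M] [Module R M] : Submodule R M :=
  sSup {S : Submodule R M | IsSimpleModule R ↥S}

/-- Endo-triviality of a representation `ρ` of `D` on `V`: `Hom_k(V,V)`, with the
conjugation action `(g·f)(v) = g·f(g⁻¹·v)` of `D`, is as a `kD`-module isomorphic to
the direct sum of the trivial module `k` and a (finitely generated) free `kD`-module. -/
def IsEndoTrivialRep {V : Type} [AddCommMonoid V] [Module k V]
    (ρ : Representation k D V) : Prop :=
  ∃ n : ℕ, Nonempty
    ((ρ.linHom ρ).asModule ≃ₗ[MonoidAlgebra k D]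
      (kTriv k D × (Fin n → MonoidAlgebra k D)))

open scoped TensorProduct in
/-- Base change (reduction) of a representation along `W → k`. -/
noncomputable def redRep {k : Type} [Field k] {D : Type} [Group D]
    {W : Type} [CommRing W] [Algebra W k] {L : Type} [AddCommGroup L]
    [Module W L] (μ : Representation W D L) : Representation k D (k ⊗[W] L) :=
  (Module.End.baseChangeHom W k L).toRingHom.toMonoidHom.comp μ

end

set_option linter.unusedSectionVars false
set_option maxHeartbeats 1000000

section AuxA
variable {k D : Type} [Semiring k] [Group D] [Fintype D]

lemma aux_invariant (a : MonoidAlgebra k D)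
    (h : ∀ g : D, MonoidAlgebra.single g (1:k) * a = a) :
    a = (a.coeff 1) • ∑ g : D, MonoidAlgebra.single g (1:k) := by
  have hc : ∀ y : D, a.coeff y = a.coeff 1 := by
    intro y
    conv_lhs => rw [← h y, MonoidAlgebra.coeff_single_mul_apply]
    simp
  ext z
  classical
  rw [MonoidAlgebra.coeff_smul_apply]
  rw [show ((∑ g : D, MonoidAlgebra.single g (1:k)).coeff z) = 1 by
    rw [MonoidAlgebra.coeff_sum, Finset.sum_apply']
    simp [Finsupp.single_apply]]
  rw [smul_eq_mul, mul_one, hc z]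

end AuxA

section AuxB
variable {k G V : Type} [CommRing k] [Group G] [AddCommGroup V] [Module k V]

lemma aux_algebraMap_smul (ρ : Representation k G V) (c : k) (x : ρ.asModule) :
    (algebraMap k (MonoidAlgebra k G) c) • x = c • x := by
  show ρ.asAlgebraHom _ x = _
  rw [AlgHom.commutes]
  rfl

lemma aux_Rsmul_smul (ρ : Representation k G V) (r : k) (a : MonoidAlgebra k G)
    (z : ρ.asModule) : (r • a) • z = r • (a • z) := by
  show ρ.asAlgebraHom (r • a) z = r • (ρ.asAlgebraHom a z)
  rw [map_smul]
  rfl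

lemma aux_single_smul (ρ : Representation k G V) (g : G) (r : k) (x : ρ.asModule) :
    (MonoidAlgebra.single g r) • x = r • (ρ g (x : V)) := by
  show ρ.asAlgebraHom _ x = _
  rw [Representation.asAlgebraHom_single]
  rfl

end AuxB

section AuxC
variable {R : Type} [CommRing R] [Nontrivial R]

lemma aux_equiv_of_finrank_eq (M N : Type) [AddCommGroup M] [Module R M] [AddCommGroup N]
    [Module R N] [Module.Free R M] [Module.Finite R M] [Module.Free R N] [Module.Finite R N]
    (h : Module.finrank R M = Module.finrank R N) : Nonempty (M ≃ₗ[R] N) := by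
  have b1 := Module.Free.chooseBasis R M
  have b2 := Module.Free.chooseBasis R N
  rw [Module.finrank_eq_card_chooseBasisIndex, Module.finrank_eq_card_chooseBasisIndex] at h
  exact ⟨b1.equiv b2 (Fintype.equivOfCardEq h)⟩

end AuxC

section AuxD
variable {k : Type} [Field k] {D : Type} [Group D]
variable {R : Type} [CommRing R] [Algebra R k]
variable {U : Type} [AddCommGroup U] [Module R U]

noncomputable def redEnd (μ : Representation R D U) :
    (μ.linHom μ).asModule → ((redRep (k:=k) μ).linHom (redRep (k:=k) μ)).asModule :=
  fun f => LinearMap.baseChange k (f : U →ₗ[R] U)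

noncomputable def redMA (R : Type) [CommRing R] [Algebra R k] :
    MonoidAlgebra R D → MonoidAlgebra k D :=
  fun a => MonoidAlgebra.ofCoeff (Finsupp.mapRange (algebraMap R k) (map_zero _) a.coeff)

lemma redMA_single (g : D) (r : R) :
    redMA (k := k) R (MonoidAlgebra.single g r) = MonoidAlgebra.single g (algebraMap R k r) :=
  congrArg MonoidAlgebra.ofCoeff Finsupp.mapRange_single

lemma redMA_add (a b : MonoidAlgebra R D) :
    redMA (k := k) R (a + b) = redMA R a + redMA R b := 
  congrArg MonoidAlgebra.ofCoeff (Finsupp.mapRange_add (map_add _) a.coeff b.coeff)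

lemma redMA_surjective (hres : Function.Surjective (algebraMap R k)) :
    Function.Surjective (redMA (D := D) (k := k) R) :=
  fun b => by
    obtain ⟨c, hc⟩ := Finsupp.mapRange_surjective _ (map_zero _) hres b.coeff
    exact ⟨MonoidAlgebra.ofCoeff c, congrArg MonoidAlgebra.ofCoeff hc⟩

variable (μ : Representation R D U)

lemma redEnd_eq (x : (μ.linHom μ).asModule) :
    redEnd (k := k) μ x = LinearMap.baseChange k (x : U →ₗ[R] U) := rfl

lemma redEnd_add (x y : (μ.linHom μ).asModule) :
    redEnd (k := k) μ (x + y) = redEnd (k:=k) μ x + redEnd (k:=k) μ y := by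
  show (LinearMap.baseChangeHom R k U U) ((x : U →ₗ[R] U) + y) = _
  exact map_add (LinearMap.baseChangeHom R k U U) (x : U →ₗ[R] U) (y : U →ₗ[R] U)

lemma redEnd_sub (x y : (μ.linHom μ).asModule) :
    redEnd (k := k) μ ((x : U →ₗ[R] U) - y)
      = @id ((k ⊗[R] U) →ₗ[k] (k ⊗[R] U)) (redEnd (k:=k) μ x)
        - @id ((k ⊗[R] U) →ₗ[k] (k ⊗[R] U)) (redEnd (k:=k) μ y) := by
  show (LinearMap.baseChangeHom R k U U) ((x : U →ₗ[R] U) - y) = _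
  exact map_sub (LinearMap.baseChangeHom R k U U) (x : U →ₗ[R] U) (y : U →ₗ[R] U)

lemma redEnd_sum {ι : Type} (s : Finset ι) (f : ι → (μ.linHom μ).asModule) :
    redEnd (k := k) μ (∑ i ∈ s, f i) = ∑ i ∈ s, redEnd (k:=k) μ (f i) := by
  show (LinearMap.baseChangeHom R k U U) (∑ i ∈ s, (f i : U →ₗ[R] U)) = _
  exact map_sum (LinearMap.baseChangeHom R k U U) (fun i => (f i : U →ₗ[R] U)) s

lemma redEnd_Rsmul (r : R) (x : (μ.linHom μ).asModule) :
    redEnd (k := k) μ (r • x) = algebraMap R k r • redEnd (k:=k) μ x := by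
  show LinearMap.baseChange k (r • (x : U →ₗ[R] U))
    = algebraMap R k r • (LinearMap.baseChange k (x : U →ₗ[R] U))
  exact (LinearMap.baseChange_smul (A := k) r (x : U →ₗ[R] U)).trans
    (algebraMap_smul k r (LinearMap.baseChange k (x : U →ₗ[R] U))).symm

lemma redEnd_single_smul (g : D) (r : R) (x : (μ.linHom μ).asModule) :
    redEnd (k := k) μ (MonoidAlgebra.single g r • x)
      = MonoidAlgebra.single g (algebraMap R k r) • redEnd (k:=k) μ x := by
  have h1 : (MonoidAlgebra.single g r • x : (μ.linHom μ).asModule)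
      = ((r • (μ g ∘ₗ (x : U →ₗ[R] U) ∘ₗ μ g⁻¹) : U →ₗ[R] U) : (μ.linHom μ).asModule) := by
    rw [aux_single_smul]; rfl
  have h2 : (MonoidAlgebra.single g (algebraMap R k r) • redEnd (k:=k) μ x)
      = algebraMap R k r • ((μ g).baseChange k ∘ₗ
          ((x : U →ₗ[R] U).baseChange k) ∘ₗ (μ g⁻¹).baseChange k) := by
    show ((redRep (k:=k) μ).linHom (redRep (k:=k) μ)).asAlgebraHom _ _ = _
    rw [Representation.asAlgebraHom_single]
    rfl
  rw [h2, h1]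
  show LinearMap.baseChange k ((r • (μ g ∘ₗ (x : U →ₗ[R] U) ∘ₗ μ g⁻¹) : U →ₗ[R] U)) = _
  rw [LinearMap.baseChange_smul, LinearMap.baseChange_comp,
    LinearMap.baseChange_comp (g := (x : U →ₗ[R] U)), algebraMap_smul]

lemma redEnd_smul (a : MonoidAlgebra R D) (x : (μ.linHom μ).asModule) :
    redEnd (k := k) μ (a • x) = redMA (k := k) R a • redEnd (k:=k) μ x := by
  induction a using MonoidAlgebra.induction_linear with
  | zero =>
    have : ((0 : MonoidAlgebra R D) • x) = (0 : (μ.linHom μ).asModule) := by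
      rw [zero_smul]
    rw [this]
    show (LinearMap.baseChangeHom R k U U) 0 = _
    rw [map_zero]
    show (0 : (k ⊗[R] U) →ₗ[k] (k ⊗[R] U)) = redMA (k:=k) R 0 • redEnd (k:=k) μ x
    rw [show redMA (k:=k) R 0 = 0 from congrArg MonoidAlgebra.ofCoeff Finsupp.mapRange_zero]
    exact (zero_smul (MonoidAlgebra k D) (redEnd (k:=k) μ x)).symm
  | add a b ha hb =>
    rw [add_smul, redEnd_add, ha, hb, redMA_add, add_smul]
  | single g r =>
    rw [redEnd_single_smul, redMA_single]

end AuxD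

section AuxE
variable {k : Type} [Field k]
variable {R : Type} [CommRing R] [Algebra R k]
variable {U : Type} [AddCommGroup U] [Module R U]
variable [Module.Free R U] [Module.Finite R U]

lemma aux_baseChange_surj (hres : Function.Surjective (algebraMap R k))
    (w : (k ⊗[R] U) →ₗ[k] (k ⊗[R] U)) :
    ∃ f : U →ₗ[R] U, LinearMap.baseChange k f = w := by
  classical
  set b := Module.Free.chooseBasis R U with hb
  set bV := Algebra.TensorProduct.basis k b with hbV
  choose s hs using hres
  refine ⟨b.constr R (fun j => ∑ i, s ((bV.repr (w (bV j))) i) • b i), ?_⟩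
  apply bV.ext
  intro j
  rw [hbV, Algebra.TensorProduct.basis_apply, LinearMap.baseChange_tmul]
  rw [Module.Basis.constr_basis]
  have : (1:k) ⊗ₜ[R] (∑ i, s ((bV.repr (w (bV j))) i) • b i)
      = ∑ i, ((bV.repr (w (bV j))) i) • ((1:k) ⊗ₜ[R] b i) := by
    rw [TensorProduct.tmul_sum]
    refine Finset.sum_congr rfl (fun i _ => ?_)
    rw [TensorProduct.tmul_smul]
    conv_rhs => rw [← hs ((bV.repr (w (bV j))) i), algebraMap_smul]
  rw [this]
  have h2 : ∀ i, (1:k) ⊗ₜ[R] b i = bV i := fun i =>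
    (Algebra.TensorProduct.basis_apply b i).symm
  simp_rw [h2]
  exact bV.sum_repr (w (bV j))

lemma aux_baseChange_ker (f : U →ₗ[R] U) (hf : LinearMap.baseChange k f = 0) :
    f ∈ (RingHom.ker (algebraMap R k)) • (⊤ : Submodule R (U →ₗ[R] U)) := by
  classical
  set b := Module.Free.chooseBasis R U with hb
  set bV := Algebra.TensorProduct.basis k b with hbV
  set bE := b.linearMap b with hbE
  have hcoef : ∀ p : _ × _, bE.repr f p ∈ RingHom.ker (algebraMap R k) := by
    intro p
    have h1 : LinearMap.baseChange k f (bV p.2) = 0 := by rw [hf]; rfl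
    rw [hbV, Algebra.TensorProduct.basis_apply, LinearMap.baseChange_tmul] at h1
    have h2 := congrArg (fun z => (bV.repr z) p.1) h1
    simp only [map_zero, Finsupp.coe_zero, Pi.zero_apply] at h2
    rw [hbV, Algebra.TensorProduct.basis_repr_tmul] at h2
    simp only [one_smul, Finsupp.mapRange_apply] at h2
    rw [RingHom.mem_ker]
    rw [hbE, Module.Basis.linearMap_repr_apply]
    convert h2 using 2
    simp [Matrix.stdBasis, LinearMap.toMatrix_apply]
  have := bE.sum_repr f
  rw [← this]
  exact Submodule.sum_mem _ (fun p _ =>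
    Submodule.smul_mem_smul (hcoef p) Submodule.mem_top)

end AuxE

section AuxF
variable {k : Type} [Field k] {D : Type} [Group D] [Fintype D]
variable {V : Type} [AddCommGroup V] [Module k V]

lemma aux_ksmul (ρ : Representation k D V) (n : ℕ)
    (e : (ρ.linHom ρ).asModule ≃ₗ[MonoidAlgebra k D]
      (kTriv k D × (Fin n → MonoidAlgebra k D)))
    (c : k) (z : (ρ.linHom ρ).asModule) : e (c • z) = c • e z := by
  rw [← aux_algebraMap_smul (ρ.linHom ρ) c z, map_smul]
  refine Prod.ext ?_ ?_
  · rw [Prod.smul_fst, Prod.smul_fst]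
    exact aux_algebraMap_smul (Representation.trivial k (G := D) (V := k)) c (e z).1
  · rw [Prod.smul_snd, Prod.smul_snd]
    funext i
    rw [Pi.smul_apply, Pi.smul_apply]
    exact algebraMap_smul (MonoidAlgebra k D) c ((e z).2 i)

variable [Module.Finite k V] [Module.Free k V]

lemma aux_dim (ρ : Representation k D V) (n : ℕ)
    (e : (ρ.linHom ρ).asModule ≃ₗ[MonoidAlgebra k D]
      (kTriv k D × (Fin n → MonoidAlgebra k D))) :
    Module.finrank k V ^ 2 = 1 + n * Fintype.card D := by
  classical
  haveI : Module.Finite k (MonoidAlgebra k D) :=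
    Module.Finite.equiv ((Finsupp.linearEquivFunOnFinite k k D).symm.trans (MonoidAlgebra.coeffLinearEquiv k).symm :
      (D → k) ≃ₗ[k] MonoidAlgebra k D)
  haveI : Module.Free k (MonoidAlgebra k D) :=
    Module.Free.of_equiv ((Finsupp.linearEquivFunOnFinite k k D).symm.trans (MonoidAlgebra.coeffLinearEquiv k).symm :
      (D → k) ≃ₗ[k] MonoidAlgebra k D)
  let ek : ((V →ₗ[k] V) ≃ₗ[k] (k × (Fin n → MonoidAlgebra k D))) :=
    AddEquiv.toLinearEquiv e.toAddEquiv (aux_ksmul ρ n e)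
  have h1 : Module.finrank k (V →ₗ[k] V) = Module.finrank k (k × (Fin n → MonoidAlgebra k D)) :=
    ek.finrank_eq
  rw [Module.finrank_linearMap, Module.finrank_prod, Module.finrank_self,
    Module.finrank_pi_fintype, Finset.sum_const, Finset.card_univ] at h1
  rw [pow_two, h1]
  congr 2
  · exact Fintype.card_fin n
  · exact (MonoidAlgebra.coeffLinearEquiv k).finrank_eq.trans (Module.finrank_finsupp_self k)

lemma aux_fst_ne_zero (ρ : Representation k D V)
    (h2k : ((2 : ℕ) : k) = 0)
    (hcardk : ((Fintype.card D : ℕ) : k) = 0)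
    (hodd : Odd (Module.finrank k V)) (n : ℕ)
    (e : (ρ.linHom ρ).asModule ≃ₗ[MonoidAlgebra k D]
      (kTriv k D × (Fin n → MonoidAlgebra k D))) :
    (e (show (ρ.linHom ρ).asModule from LinearMap.id)).1 ≠ 0 := by
  classical
  set toEnd : (ρ.linHom ρ).asModule → (V →ₗ[k] V) := fun f => f with htoEnd
  set idM : (ρ.linHom ρ).asModule := (show (ρ.linHom ρ).asModule from LinearMap.id) with hidM
  intro h0
  have hinv : ∀ g : D, (MonoidAlgebra.single g (1:k)) • idM = idM := by
    intro g
    have h4 := aux_single_smul (ρ.linHom ρ) g (1:k) idM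
    rw [one_smul, Representation.linHom_apply] at h4
    rw [h4]
    show ρ g * ((LinearMap.id : V →ₗ[k] V) * ρ g⁻¹) = idM
    rw [← Module.End.one_eq_id, one_mul, ← map_mul, mul_inv_cancel, map_one]
    rfl
  have heinv : ∀ g : D, (MonoidAlgebra.single g (1:k)) • (e idM) = e idM := by
    intro g
    rw [← map_smul, hinv]
  have hcomp : ∀ (i : Fin n) (g : D),
      MonoidAlgebra.single g (1:k) * ((e idM).2 i) = (e idM).2 i := by
    intro i g
    have := congrArg (fun p => p.2 i) (heinv g)
    simpa [Prod.smul_def, smul_eq_mul] using this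
  set c : Fin n → k := fun i => ((e idM).2 i).coeff 1 with hc
  set Nelt : MonoidAlgebra k D := ∑ g : D, MonoidAlgebra.single g (1:k) with hN
  have hform : ∀ i, (e idM).2 i = c i • Nelt := fun i => aux_invariant _ (hcomp i)
  set y : (ρ.linHom ρ).asModule :=
    e.symm (0, fun i => c i • (1 : MonoidAlgebra k D)) with hy
  have hNy : Nelt • y = idM := by
    rw [hy, ← map_smul]
    have h1 : Nelt • ((0 : kTriv k D), fun i => c i • (1 : MonoidAlgebra k D))
        = ((0 : kTriv k D), fun i => c i • Nelt) := by
      rw [Prod.smul_def, smul_zero]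
      congr 1
      funext i
      rw [Pi.smul_apply, smul_eq_mul, mul_smul_comm, mul_one]
    rw [h1]
    have h2 : ((0 : kTriv k D), fun i => c i • Nelt) = e idM := by
      refine Prod.ext h0.symm ?_
      funext i
      exact (hform i).symm
    rw [h2, LinearEquiv.symm_apply_apply]
  have tN : LinearMap.trace k V (toEnd (Nelt • y))
      = ∑ g : D, LinearMap.trace k V (toEnd (MonoidAlgebra.single g (1:k) • y)) := by
    have h3 : toEnd (Nelt • y) = ∑ g : D, toEnd (MonoidAlgebra.single g (1:k) • y) := by
      show toEnd ((∑ g : D, MonoidAlgebra.single g (1:k)) • y) = _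
      rw [Finset.sum_smul]
      rfl
    rw [h3, map_sum]
  have h5 : ∀ g : D, LinearMap.trace k V (toEnd (MonoidAlgebra.single g (1:k) • y))
      = LinearMap.trace k V (toEnd y) := by
    intro g
    have h4' : toEnd (MonoidAlgebra.single g (1:k) • y) = ρ g * (toEnd y * ρ g⁻¹) := by
      have h4 := aux_single_smul (ρ.linHom ρ) g (1:k) y
      rw [one_smul] at h4
      exact h4
    rw [h4', LinearMap.trace_mul_comm, mul_assoc, ← map_mul, inv_mul_cancel, map_one, mul_one]
  have htr : LinearMap.trace k V (toEnd idM)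
      = Fintype.card D • LinearMap.trace k V (toEnd y) := by
    rw [← hNy, tN, Finset.sum_congr rfl (fun g _ => h5 g), Finset.sum_const,
      Finset.card_univ]
  have hid : LinearMap.trace k V (toEnd idM) = (Module.finrank k V : k) := by
    show LinearMap.trace k V LinearMap.id = _
    exact LinearMap.trace_id k V
  obtain ⟨t, ht⟩ := hodd
  rw [hid, ht] at htr
  rw [nsmul_eq_mul, hcardk, zero_mul] at htr
  have : ((2 * t + 1 : ℕ) : k) = 1 := by
    push_cast
    rw [show ((2:k)) = ((2:ℕ):k) by norm_num, h2k]
    ring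
  rw [this] at htr
  exact one_ne_zero htr

end AuxF

section AuxQ
variable {R : Type} [CommRing R] {D : Type} [Group D]
variable {U : Type} [AddCommGroup U] [Module R U]

/-- identity as an element of the conjugation module -/
noncomputable def idEnd (μ : Representation R D U) : (μ.linHom μ).asModule :=
  (LinearMap.id : U →ₗ[R] U)

/-- coercion out of the trivial module -/
def trivCoe : (Representation.trivial R (G := D) (V := R)).asModule → R := fun t => t

lemma trivCoe_add (s t : (Representation.trivial R (G := D) (V := R)).asModule) :
    trivCoe (s + t) = trivCoe s + trivCoe t := rfl

lemma trivCoe_single (g : D) (r : R)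
    (t : (Representation.trivial R (G := D) (V := R)).asModule) :
    trivCoe (MonoidAlgebra.single g r • t) = r * trivCoe t := by
  show ((MonoidAlgebra.single g r • t :
    (Representation.trivial R (G := D) (V := R)).asModule) : R) = _
  rw [aux_single_smul]
  rfl

/-- the `RD`-linear map from the trivial module hitting the identity endomorphism -/
noncomputable def Qone (μ : Representation R D U) :
    (Representation.trivial R (G := D) (V := R)).asModule
      →ₗ[MonoidAlgebra R D] (μ.linHom μ).asModule where
  toFun t := trivCoe t • idEnd μ
  map_add' s t := by
    show trivCoe (s + t) • idEnd μ = trivCoe s • idEnd μ + trivCoe t • idEnd μ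
    rw [trivCoe_add, add_smul]
  map_smul' a t := by
    simp only [RingHom.id_apply]
    induction a using MonoidAlgebra.induction_linear with
    | zero =>
      rw [zero_smul, zero_smul]
      show (0 : R) • idEnd μ = (0 : (μ.linHom μ).asModule)
      rw [zero_smul]
    | add a b ha hb =>
      rw [add_smul, trivCoe_add, add_smul, ha, hb, add_smul]
    | single g r =>
      rw [trivCoe_single]
      have h2 : (MonoidAlgebra.single g r • (trivCoe t • idEnd μ) : (μ.linHom μ).asModule)
          = r • (μ g ∘ₗ (trivCoe t • (LinearMap.id : U →ₗ[R] U)) ∘ₗ μ g⁻¹) := by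
        rw [aux_single_smul]
        rfl
      rw [h2, LinearMap.smul_comp, LinearMap.id_comp, LinearMap.comp_smul, smul_smul]
      have h3 : μ g ∘ₗ μ g⁻¹ = (LinearMap.id : U →ₗ[R] U) := by
        show (μ g * μ g⁻¹ : U →ₗ[R] U) = _
        rw [← map_mul, mul_inv_cancel, map_one]
        rfl
      rw [h3]
      rfl

/-- the `RD`-linear map from a free module hitting chosen elements -/
noncomputable def Qtwo (μ : Representation R D U) (n : ℕ)
    (x : Fin n → (μ.linHom μ).asModule) :
    (Fin n → MonoidAlgebra R D) →ₗ[MonoidAlgebra R D] (μ.linHom μ).asModule where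
  toFun v := ∑ i, v i • x i
  map_add' v w := by
    simp only [Pi.add_apply]
    rw [← Finset.sum_add_distrib]
    refine Finset.sum_congr rfl (fun i _ => ?_)
    rw [add_smul]
  map_smul' a v := by
    simp only [RingHom.id_apply, Pi.smul_apply, smul_eq_mul]
    rw [Finset.smul_sum]
    refine Finset.sum_congr rfl (fun i _ => ?_)
    rw [mul_smul]

end AuxQ

section Main

theorem main_aux (k : Type) [Field k] (D : Type) [Group D] [CharP k 2] [Fintype D]
    (d : ℕ) (hd : 0 < d) (hcard : Fintype.card D = 2 ^ d)
    (R : Type) [CommRing R] [IsLocalRing R] [IsNoetherianRing R] [Algebra R k]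
    (hres : Function.Surjective (algebraMap R k))
    (hker : RingHom.ker (algebraMap R k) = IsLocalRing.maximalIdeal R)
    (U : Type) [AddCommGroup U] [Module R U]
    [Module.Free R U] [Module.Finite R U] (μ : Representation R D U) (n : ℕ)
    (e : ((redRep (k:=k) μ).linHom (redRep (k:=k) μ)).asModule ≃ₗ[MonoidAlgebra k D]
      (kTriv k D × (Fin n → MonoidAlgebra k D))) :
    Nonempty ((μ.linHom μ).asModule ≃ₗ[MonoidAlgebra R D]
        ((Representation.trivial R (G := D) (V := R)).asModule ×
          (Fin n → MonoidAlgebra R D))) := by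
  classical
  haveI hVfree : Module.Free k (k ⊗[R] U) :=
    Module.Free.of_basis (Algebra.TensorProduct.basis k (Module.Free.chooseBasis R U))
  haveI hVfin : Module.Finite k (k ⊗[R] U) :=
    Module.Finite.of_basis (Algebra.TensorProduct.basis k (Module.Free.chooseBasis R U))
  -- numerology
  have h2k : ((2:ℕ) : k) = 0 := CharP.cast_eq_zero k 2
  have hcardk : ((Fintype.card D : ℕ) : k) = 0 := by
    rw [hcard, Nat.cast_pow, h2k, zero_pow hd.ne']
  have hdimk : Module.finrank k (k ⊗[R] U) ^ 2 = 1 + n * Fintype.card D :=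
    aux_dim (redRep (k:=k) μ) n e
  have hodd : Odd (Module.finrank k (k ⊗[R] U)) := by
    have heven : Even (n * Fintype.card D) := by
      rw [hcard]
      exact (Nat.even_pow.mpr ⟨even_two, hd.ne'⟩).mul_left n
    have hodd2 : Odd (Module.finrank k (k ⊗[R] U) ^ 2) := by
      rw [hdimk, add_comm]
      exact Even.add_one heven
    rcases Nat.even_or_odd (Module.finrank k (k ⊗[R] U)) with hE | hO
    · exact absurd hodd2 (Nat.not_odd_iff_even.mpr
        ((Nat.even_pow).mpr ⟨hE, by norm_num⟩))
    · exact hO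
  have hc0 : (e (show ((redRep (k:=k) μ).linHom (redRep (k:=k) μ)).asModule
      from LinearMap.id)).1 ≠ 0 :=
    aux_fst_ne_zero _ h2k hcardk hodd n e
  -- lifts of the free generators
  set yb : Fin n → ((redRep (k:=k) μ).linHom (redRep (k:=k) μ)).asModule :=
    fun i => e.symm (((0 : kTriv k D), Pi.single i (1 : MonoidAlgebra k D))) with hyb
  choose x hx using fun i : Fin n =>
    aux_baseChange_surj (R := R) (U := U) hres
      ((yb i) : (k ⊗[R] U) →ₗ[k] (k ⊗[R] U))
  set x' : Fin n → (μ.linHom μ).asModule := fun i => (show (μ.linHom μ).asModule from x i)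
    with hx'
  -- the candidate map
  set Q : ((Representation.trivial R (G := D) (V := R)).asModule ×
      (Fin n → MonoidAlgebra R D)) →ₗ[MonoidAlgebra R D] (μ.linHom μ).asModule :=
    (Qone μ).coprod (Qtwo μ n x') with hQ
  -- the key surjectivity-modulo-m statement
  have claimC : ∀ yy : (μ.linHom μ).asModule,
      ∃ p, redEnd (k:=k) μ (Q p) = redEnd (k:=k) μ yy := by
    intro yy
    set w : ((redRep (k:=k) μ).linHom (redRep (k:=k) μ)).asModule :=
      redEnd (k:=k) μ yy with hw
    set idMk : ((redRep (k:=k) μ).linHom (redRep (k:=k) μ)).asModule :=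
      (show ((redRep (k:=k) μ).linHom (redRep (k:=k) μ)).asModule from LinearMap.id) with hidMk
    have hredid : redEnd (k:=k) μ (idEnd μ) = idMk := by
      show LinearMap.baseChange k (LinearMap.id : U →ₗ[R] U) = _
      rw [LinearMap.baseChange_id]
    set cst : k := (show k from (e idMk).1) with hcst
    have hcne : cst ≠ 0 := hc0
    set s : k := (show k from (e w).1) / cst with hs
    obtain ⟨rs, hrs⟩ := hres s
    set v' : Fin n → MonoidAlgebra k D :=
      fun i => (e w).2 i - s • (e idMk).2 i with hv'
    choose a ha using fun i : Fin n =>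
      redMA_surjective (k := k) (R := R) (D := D) hres (v' i)
    refine ⟨((show (Representation.trivial R (G := D) (V := R)).asModule from rs), a), ?_⟩
    have hQp : redEnd (k:=k) μ
        (Q ((show (Representation.trivial R (G := D) (V := R)).asModule from rs), a))
        = s • idMk + ∑ i, v' i • yb i := by
      rw [hQ, LinearMap.coprod_apply, redEnd_add]
      congr 1
      · show redEnd (k:=k) μ (rs • idEnd μ) = s • idMk
        rw [redEnd_Rsmul, hredid, hrs]
      · show redEnd (k:=k) μ (∑ i, a i • x' i) = _
        rw [redEnd_sum]
        refine Finset.sum_congr rfl (fun i _ => ?_)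
        rw [redEnd_smul, ha i]
        congr 1
        show LinearMap.baseChange k (x i) = _
        exact hx i
    have hsum2 : ∑ i, v' i • yb i
        = e.symm ((0 : kTriv k D), v') := by
      have hterm : ∀ i : Fin n, v' i • yb i
          = e.symm (v' i • (((0 : kTriv k D), Pi.single i (1 : MonoidAlgebra k D))
              : kTriv k D × (Fin n → MonoidAlgebra k D))) :=
        fun i => (map_smul e.symm _ _).symm
      rw [Finset.sum_congr rfl (fun i _ => hterm i), ← map_sum]
      congr 1
      refine Prod.ext ?_ ?_
      · rw [Prod.fst_sum]
        simp
      · rw [Prod.snd_sum]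
        simp only [Prod.smul_snd]
        funext j
        rw [Finset.sum_apply]
        simp [Pi.single_apply, smul_eq_mul]
    have hwdec : w = s • idMk + e.symm ((0 : kTriv k D), v') := by
      apply e.injective
      rw [map_add, aux_ksmul (redRep (k:=k) μ) n e, LinearEquiv.apply_symm_apply]
      refine Prod.ext ?_ ?_
      · rw [Prod.fst_add, Prod.smul_fst]
        show (show k from (e w).1) = s * cst + 0
        rw [add_zero, hs, div_mul_cancel₀ _ hcne]
      · rw [Prod.snd_add, Prod.smul_snd]
        funext i
        show (e w).2 i = s • (e idMk).2 i + ((e w).2 i - s • (e idMk).2 i)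
        rw [add_comm, sub_add_cancel]
    rw [hQp, hsum2, ← hwdec]
  -- R-linear version of Q
  set QR : ((Representation.trivial R (G := D) (V := R)).asModule ×
      (Fin n → MonoidAlgebra R D)) →ₗ[R] (U →ₗ[R] U) :=
    { toFun := fun p => Q p
      map_add' := fun p q => Q.map_add p q
      map_smul' := by
        intro r p
        simp only [RingHom.id_apply]
        show Q (r • p) = r • Q p
        rw [hQ, LinearMap.coprod_apply, LinearMap.coprod_apply, smul_add]
        congr 1
        · show trivCoe (r • p.1) • idEnd μ = r • (trivCoe p.1 • idEnd μ)
          show (r * trivCoe p.1) • idEnd μ = r • (trivCoe p.1 • idEnd μ)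
          rw [mul_smul]
        · show ∑ i, (r • p.2) i • x' i = r • ∑ i, p.2 i • x' i
          rw [Finset.smul_sum]
          refine Finset.sum_congr rfl (fun i _ => ?_)
          rw [Pi.smul_apply]
          exact aux_Rsmul_smul (μ.linHom μ) r (p.2 i) _ } with hQR
  -- surjectivity via Nakayama
  have hsurj : Function.Surjective Q := by
    have hrange : ∀ yy : (U →ₗ[R] U), yy ∈ LinearMap.range QR ⊔
        (IsLocalRing.maximalIdeal R) • (⊤ : Submodule R (U →ₗ[R] U)) := by
      intro yy
      obtain ⟨p, hp⟩ := claimC yy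
      set z : U →ₗ[R] U := (show U →ₗ[R] U from Q p) with hz
      have hker0 : LinearMap.baseChange k (yy - z) = 0 := by
        have h6 := redEnd_sub (k:=k) μ yy (Q p)
        rw [hp] at h6
        exact h6.trans (sub_self (G := (k ⊗[R] U) →ₗ[k] (k ⊗[R] U)) (redEnd (k:=k) μ yy))
      have hmem : yy - z ∈
          (IsLocalRing.maximalIdeal R) • (⊤ : Submodule R (U →ₗ[R] U)) := by
        rw [← hker]
        exact aux_baseChange_ker _ hker0
      have hyy : yy = z + (yy - z) := by rw [add_comm, sub_add_cancel]
      rw [hyy]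
      exact Submodule.add_mem_sup (⟨p, rfl⟩ : z ∈ LinearMap.range QR) hmem
    have htop : (⊤ : Submodule R (U →ₗ[R] U)) ≤ LinearMap.range QR :=
      Submodule.le_of_le_smul_of_le_jacobson_bot
        (Module.Finite.fg_top (R := R) (M := U →ₗ[R] U))
        (IsLocalRing.maximalIdeal_le_jacobson ⊥)
        (fun yy _ => hrange yy)
    intro z
    obtain ⟨p, hp⟩ := htop (Submodule.mem_top (x := (show U →ₗ[R] U from z)))
    exact ⟨p, hp⟩
  -- injectivity via rank counting
  have hinj : Function.Injective Q := by
    haveI : Module.Finite R (MonoidAlgebra R D) :=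
      Module.Finite.equiv ((Finsupp.linearEquivFunOnFinite R R D).symm.trans (MonoidAlgebra.coeffLinearEquiv R).symm :
        (D → R) ≃ₗ[R] MonoidAlgebra R D)
    haveI : Module.Free R (MonoidAlgebra R D) :=
      Module.Free.of_equiv ((Finsupp.linearEquivFunOnFinite R R D).symm.trans (MonoidAlgebra.coeffLinearEquiv R).symm :
        (D → R) ≃ₗ[R] MonoidAlgebra R D)
    have trivE : (Representation.trivial R (G := D) (V := R)).asModule ≃ₗ[R] R :=
      { toFun := trivCoe
        invFun := fun r => (show (Representation.trivial R (G := D) (V := R)).asModule from r)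
        left_inv := fun _ => rfl
        right_inv := fun _ => rfl
        map_add' := fun _ _ => rfl
        map_smul' := fun _ _ => rfl }
    haveI : Module.Free R ((Representation.trivial R (G := D) (V := R)).asModule) :=
      Module.Free.of_equiv trivE.symm
    haveI : Module.Finite R ((Representation.trivial R (G := D) (V := R)).asModule) :=
      Module.Finite.equiv trivE.symm
    have hkU : Module.finrank k (k ⊗[R] U) = Module.finrank R U :=
      Module.finrank_baseChange
    have hrT : Module.finrank R (U →ₗ[R] U) = 1 + n * Fintype.card D := by
      rw [Module.finrank_linearMap, ← pow_two, ← hkU, hdimk]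
    have hrDom : Module.finrank R
        ((Representation.trivial R (G := D) (V := R)).asModule ×
          (Fin n → MonoidAlgebra R D)) = 1 + n * Fintype.card D := by
      rw [Module.finrank_prod, Module.finrank_pi_fintype, Finset.sum_const,
        Finset.card_univ, Fintype.card_fin]
      congr 1
      · rw [trivE.finrank_eq, Module.finrank_self]
      · congr 1
        exact (MonoidAlgebra.coeffLinearEquiv R).finrank_eq.trans (Module.finrank_finsupp_self R)
    obtain ⟨φ⟩ := aux_equiv_of_finrank_eq (R := R)
      ((Representation.trivial R (G := D) (V := R)).asModule ×
        (Fin n → MonoidAlgebra R D)) (U →ₗ[R] U) (hrDom.trans hrT.symm)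
    have hend := IsNoetherian.injective_of_surjective_endomorphism
      (QR ∘ₗ (φ.symm : (U →ₗ[R] U) →ₗ[R] _)) (by
        intro z
        obtain ⟨p, hp⟩ := hsurj z
        refine ⟨φ p, ?_⟩
        simp only [LinearMap.comp_apply, LinearEquiv.coe_coe, LinearEquiv.symm_apply_apply]
        exact hp)
    intro p q hpq
    have h7 : (QR ∘ₗ (φ.symm : (U →ₗ[R] U) →ₗ[R] _)) (φ p)
        = (QR ∘ₗ (φ.symm : (U →ₗ[R] U) →ₗ[R] _)) (φ q) := by
      simp only [LinearMap.comp_apply, LinearEquiv.coe_coe, LinearEquiv.symm_apply_apply]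
      exact hpq
    exact φ.injective (hend h7)
  exact ⟨(LinearEquiv.ofBijective Q ⟨hinj, hsurj⟩).symm⟩

end Main

section
variable (k : Type) [Field k] (D : Type) [Group D]

/-- Let `R` be a complete local commutative Noetherian ring with residue
field `k`, and let `U` be an `RD`-module, finitely generated free over `R`, whose
reduction `k ⊗_R U` is an endo-trivial `kD`-module.  Then `Hom_R(U, U)`, with `D`
acting by conjugation, is isomorphic as an `RD`-module to the direct sum of the trivial
`RD`-module `R` and a (finitely generated) free `RD`-module. -/
theorem stmt_19 [IsAlgClosed k] [CharP k 2] [Fintype D] (d : ℕ) (σ τ : D)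
    (hd : 3 ≤ d) (hσ : σ ^ 2 = 1) (hτ : τ ^ 2 = 1)
    (hst : orderOf (σ * τ) = 2 ^ (d - 1)) (hgen : Subgroup.closure {σ, τ} = ⊤)
    (hcard : Fintype.card D = 2 ^ d)
    (R : Type) [CommRing R] [IsLocalRing R] [IsNoetherianRing R]
    [IsAdicComplete (IsLocalRing.maximalIdeal R) R] [Algebra R k]
    (hres : Function.Surjective (algebraMap R k))
    (hker : RingHom.ker (algebraMap R k) = IsLocalRing.maximalIdeal R)
    (U : Type) [AddCommGroup U] [Module R U] (μ : Representation R D U)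
    (hfree : Module.Free R U) (hfin : Module.Finite R U)
    (hendo : IsEndoTrivialRep k D (redRep (k := k) μ)) :
    ∃ n : ℕ, Nonempty
      ((μ.linHom μ).asModule ≃ₗ[MonoidAlgebra R D]
        ((Representation.trivial R (G := D) (V := R)).asModule ×
          (Fin n → MonoidAlgebra R D))) := by
  haveI := hfree
  haveI := hfin
  obtain ⟨n, ⟨e⟩⟩ := hendo
  have hd0 : 0 < d := lt_of_lt_of_le (by norm_num) hd
  obtain ⟨iso⟩ := main_aux k D d hd0 hcard R hres hker U μ n e
  exact ⟨n, ⟨iso⟩⟩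

end
end
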